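/- arXiv:2504.14674 — 7 statements merged into one kernel-verified Lean document; each statement's English description precedes it below -/
import Mathlib

section
/- Let m ≥ 3 be an odd integer. Then for every x ∈ 𝔽_{2^m}, Tr((x+1) + (x+1)^{2^{(m+1)/2} − 1} + (x+1)^{2^m − 2^{(m+1)/2} + 1}) = Tr(x) + 1. -/
/-!
Put `y = x + 1` and `k = (m + 1) / 2`. Since `(2^k - 1) 2^k ≡ 2^m - 2^k + 1 (mod 2^m - 1)`, the
third summand is the `2^k`-th Frobenius power of the second, so the two have the same trace and
cancel in characteristic 2. What remains is `Tr y = Tr x + Tr 1 = Tr x + m = Tr x + 1`.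
-/

open FiniteField in
theorem Algebra.trace_pow_card_pow {K L : Type*} [Field K] [Fintype K] [Field L] [Algebra K L]
    [Algebra.IsAlgebraic K L] (n : ℕ) (z : L) :
    Algebra.trace K L (z ^ Fintype.card K ^ n) = Algebra.trace K L z := by
  have hfrob : (frobeniusAlgEquivOfAlgebraic K L ^ n) z = z ^ Fintype.card K ^ n := by
    rw [AlgEquiv.coe_pow, coe_frobeniusAlgEquivOfAlgebraic_iterate]
  rw [← hfrob, Algebra.trace_eq_of_algEquiv]

theorem FiniteField.pow_add_card_sub_one {K : Type*} [Field K] [Fintype K] (y : K) {a : ℕ}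
    (ha : a ≠ 0) : y ^ (a + (Fintype.card K - 1)) = y ^ a := by
  obtain ⟨b, rfl⟩ := Nat.exists_eq_succ_of_ne_zero ha
  have hcard := Fintype.card_pos (α := K)
  rw [show b.succ + (Fintype.card K - 1) = b + Fintype.card K by omega,
    pow_add, FiniteField.pow_card, pow_succ]

theorem Algebra.trace_one_eq_finrank (R S : Type*) [CommRing R] [Nontrivial R] [CommRing S]
    [Algebra R S] [Module.Free R S] [Module.Finite R S] :
    Algebra.trace R S 1 = Module.finrank R S := by
  rw [← map_one (algebraMap R S), Algebra.trace_algebraMap, nsmul_one]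

theorem two_pow_sub_one_mul_two_pow {m k : ℕ} (h : m + 1 = 2 * k) :
    (2 ^ k - 1) * 2 ^ k = (2 ^ m - 2 ^ k + 1) + (2 ^ m - 1) := by
  have hsq : 2 * 2 ^ m = 2 ^ k * 2 ^ k := by rw [← pow_succ', ← pow_add, h, two_mul]
  have hk : 2 ≤ 2 ^ k := Nat.le_self_pow (by omega) 2
  have hkm : 2 ^ k ≤ 2 ^ m := by nlinarith
  zify [hkm, Nat.one_le_two_pow (n := m), hk.trans' one_le_two] at hsq ⊢
  linear_combination -hsq

theorem stmt0_general (m : ℕ) (hmo : Odd m) (x : GaloisField 2 m) :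
    Algebra.trace (ZMod 2) (GaloisField 2 m)
        ((x + 1) + (x + 1) ^ (2 ^ ((m + 1) / 2) - 1) +
          (x + 1) ^ (2 ^ m - 2 ^ ((m + 1) / 2) + 1)) =
      Algebra.trace (ZMod 2) (GaloisField 2 m) x + 1 := by
  obtain ⟨k, hk⟩ : ∃ k, m + 1 = 2 * k := ⟨(m + 1) / 2, by obtain ⟨j, rfl⟩ := hmo; omega⟩
  have hm : m ≠ 0 := hmo.pos.ne'
  let : Fintype (GaloisField 2 m) := Fintype.ofFinite _
  have hcard : Fintype.card (GaloisField 2 m) = 2 ^ m := by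
    rw [Fintype.card_eq_nat_card, GaloisField.card 2 m hm]
  set y := x + 1
  have hpow : y ^ (2 ^ m - 2 ^ k + 1) = (y ^ (2 ^ k - 1)) ^ 2 ^ k := by
    rw [← pow_mul, two_pow_sub_one_mul_two_pow hk, ← hcard,
      FiniteField.pow_add_card_sub_one _ (by omega)]
  have htrace_frob (z : GaloisField 2 m) :
      Algebra.trace (ZMod 2) _ (z ^ 2 ^ k) = Algebra.trace (ZMod 2) _ z := by
    simpa only [ZMod.card] using Algebra.trace_pow_card_pow (K := ZMod 2) k z
  have htrace_one : Algebra.trace (ZMod 2) (GaloisField 2 m) 1 = 1 := by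
    rw [Algebra.trace_one_eq_finrank, GaloisField.finrank 2 hm, hmo.natCast_zmod_two]
  rw [show (m + 1) / 2 = k by omega, hpow, map_add, map_add, htrace_frob, add_assoc,
    CharTwo.add_self_eq_zero, add_zero, map_add, htrace_one]

/-- Let m ≥ 3 be an odd integer. Then for every x ∈ 𝔽_{2^m},
Tr((x+1) + (x+1)^{2^{(m+1)/2} − 1} + (x+1)^{2^m − 2^{(m+1)/2} + 1}) = Tr(x) + 1,
where Tr is the absolute trace map from 𝔽_{2^m} to 𝔽₂. -/
theorem stmt0 (m : ℕ) (hm3 : 3 ≤ m) (hmo : Odd m) (x : GaloisField 2 m) :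
    Algebra.trace (ZMod 2) (GaloisField 2 m)
        ((x + 1) + (x + 1) ^ (2 ^ ((m + 1) / 2) - 1) +
          (x + 1) ^ (2 ^ m - 2 ^ ((m + 1) / 2) + 1)) =
      Algebra.trace (ZMod 2) (GaloisField 2 m) x + 1 :=
  stmt0_general m hmo x
end

section
/- Let m ≥ 3 be odd and let f₁(x) = x + x^{2^{(m+1)/2} − 1} + x^{2^m − 2^{(m+1)/2} + 1}. For the binary sequence s_t = Tr(f₁(α^t + 1)), the minimal polynomial of the sequence is g_s(x) = (x − 1)·m_{α^{−1}}(x), which has degree m + 1; consequently the binary cyclic code C_s has length 2^m − 1 and 𝔽₂-dimension 2^m − 2 − m, and its minimum distance is exactly 4 (every nonzero codeword has Hamming weight at least 4, and some codeword has Hamming weight exactly 4). -/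
open Polynomial
open scoped Classical

/-- The polynomial S(x) = ∑_{t=0}^{v−1} s_t x^t ∈ 𝔽₂[x], where
    s_t = Tr(f(α^t + 1)) and v = 2^m − 1. -/
noncomputable def traceSeqPoly (m : ℕ) (α : GaloisField 2 m)
    (f : GaloisField 2 m → GaloisField 2 m) : Polynomial (ZMod 2) :=
  ∑ t ∈ Finset.range (2 ^ m - 1),
    C (Algebra.trace (ZMod 2) (GaloisField 2 m) (f (α ^ t + 1))) * X ^ t

/-- The minimal polynomial of the sequence:
    g_s(x) = (x^v − 1)/gcd(x^v − 1, S(x)). Its degree is the linear span L_s. -/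
noncomputable def genPoly (m : ℕ) (α : GaloisField 2 m)
    (f : GaloisField 2 m → GaloisField 2 m) : Polynomial (ZMod 2) :=
  (X ^ (2 ^ m - 1) - 1) /
    EuclideanDomain.gcd (X ^ (2 ^ m - 1) - 1) (traceSeqPoly m α f)

/-- The binary cyclic code C_s = {c ∈ 𝔽₂[x] : deg c < v and g_s ∣ c},
    as an 𝔽₂-submodule of 𝔽₂[x]. -/
noncomputable def codeC (m : ℕ) (α : GaloisField 2 m)
    (f : GaloisField 2 m → GaloisField 2 m) :
    Submodule (ZMod 2) (Polynomial (ZMod 2)) :=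
  Polynomial.degreeLT (ZMod 2) (2 ^ m - 1) ⊓
    (Ideal.span {genPoly m α f}).restrictScalars (ZMod 2)

/-- The set of Hamming weights (numbers of nonzero coefficients) of the
    nonzero codewords of a code; the minimum distance is its least element. -/
def wtSet (Cs : Submodule (ZMod 2) (Polynomial (ZMod 2))) : Set ℕ :=
  {w | ∃ c : Polynomial (ZMod 2), c ∈ Cs ∧ c ≠ 0 ∧ c.support.card = w}

/-!
For odd `m` the two extra monomials of `f₁` are Frobenius conjugates, so `Tr (f₁ y) = Tr y` and
`s_t = Tr (α ^ t) + 1 = ∑_{k < m} (α ^ 2 ^ k) ^ t + 1`. At a `(2 ^ m - 1)`-th root of unity `β`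
every term of `S(β)` is then a geometric sum, and `S(β) = #{k < m | α ^ 2 ^ k β = 1} + [β = 1]`:
among these roots of unity, `S` is nonzero exactly at `1` and at the conjugates of `α⁻¹`. As
`X ^ (2 ^ m - 1) - 1` is separable and splits over `𝔽_{2^m}`, its gcd with `S` is the cofactor of
`(X - 1) m_{α⁻¹}`.

The code is the even-weight subcode of the binary Hamming code: the root `1` forces even weight,
the primitive root `α⁻¹` rules out weight `2`, and `1 + α⁻¹ + α⁻² + (1 + α⁻¹ + α⁻²) = 0` gives a
codeword of weight `4`.
-/

namespace Polynomial

theorem dvd_of_forall_aeval_eq_zero {K L : Type*} [Field K] [Field L] [Algebra K L]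
    {p q : K[X]} (hsplit : (p.map (algebraMap K L)).Splits) (hsep : p.Separable)
    (h : ∀ x : L, aeval x p = 0 → aeval x q = 0) : p ∣ q := by
  rcases eq_or_ne q 0 with rfl | hq
  · exact dvd_zero p
  refine (map_dvd_map' (algebraMap K L)).mp (hsplit.dvd_of_roots_le_roots
    (map_ne_zero hsep.ne_zero) ((Multiset.le_iff_subset (nodup_roots hsep.map)).mpr ?_))
  intro x hx
  have hx' := (mem_roots'.mp hx).2
  rw [IsRoot, eval_map_algebraMap] at hx'
  rw [mem_roots (map_ne_zero hq), IsRoot, eval_map_algebraMap]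
  exact h x hx'

theorem eq_of_associated_zmod_two {p q : (ZMod 2)[X]} (h : Associated p q) : p = q := by
  obtain ⟨u, rfl⟩ := h
  obtain ⟨r, hr, hru⟩ := Polynomial.isUnit_iff.mp u.isUnit
  have hr1 : r = 1 := (by decide : ∀ r : ZMod 2, r ≠ 0 → r = 1) r hr.ne_zero
  rw [← hru, hr1, C_1, mul_one]

theorem support_sum_X_pow {R : Type*} [Semiring R] [Nontrivial R] (s : Finset ℕ) :
    (∑ i ∈ s, (X : R[X]) ^ i).support = s := by
  ext j
  simp [mem_support_iff, finsetSum_coeff, coeff_X_pow]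

theorem aeval_eq_sum_support_pow {A : Type*} [Semiring A] [Algebra (ZMod 2) A]
    (c : (ZMod 2)[X]) (x : A) : aeval x c = ∑ i ∈ c.support, x ^ i := by
  rw [aeval_def, eval₂_eq_sum, sum_def]
  refine Finset.sum_congr rfl fun i hi => ?_
  have : c.coeff i = 1 :=
    (by decide : ∀ r : ZMod 2, r ≠ 0 → r = 1) _ (mem_support_iff.mp hi)
  rw [this, map_one, one_mul]

theorem eval_one_eq_card_support (c : (ZMod 2)[X]) : c.eval 1 = c.support.card := by
  rw [← coe_aeval_eq_eval, aeval_eq_sum_support_pow]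
  simp

theorem finrank_degreeLT_inf_span_singleton {K : Type*} [Field K] {g : K[X]} {n : ℕ}
    (hg : g ≠ 0) (hn : g.natDegree ≤ n) :
    Module.finrank K ↥(degreeLT K n ⊓ (Ideal.span {g}).restrictScalars K) =
      n - g.natDegree := by
  have hmap : (degreeLT K (n - g.natDegree)).map (LinearMap.mulLeft K g) =
      degreeLT K n ⊓ (Ideal.span {g}).restrictScalars K := by
    ext c
    simp only [Submodule.mem_map, LinearMap.mulLeft_apply, Submodule.mem_inf,
      Submodule.restrictScalars_mem, Ideal.mem_span_singleton, mem_degreeLT]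
    constructor
    · rintro ⟨d, hd, rfl⟩
      refine ⟨?_, dvd_mul_right g d⟩
      rcases eq_or_ne d 0 with rfl | hd0
      · simp
      rw [degree_eq_natDegree hd0] at hd
      rw [degree_mul, degree_eq_natDegree hg, degree_eq_natDegree hd0]
      have : d.natDegree < n - g.natDegree := by exact_mod_cast hd
      exact_mod_cast (by omega : g.natDegree + d.natDegree < n)
    · rintro ⟨hc, d, rfl⟩
      refine ⟨d, ?_, rfl⟩
      rcases eq_or_ne d 0 with rfl | hd0
      · simp
      rw [degree_mul, degree_eq_natDegree hg, degree_eq_natDegree hd0] at hc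
      rw [degree_eq_natDegree hd0]
      have : g.natDegree + d.natDegree < n := by exact_mod_cast hc
      exact_mod_cast (by omega : d.natDegree < n - g.natDegree)
  rw [← hmap, ← (Submodule.equivMapOfInjective _ (mul_right_injective₀ hg) _).finrank_eq,
    (degreeLTEquiv K _).finrank_eq, Module.finrank_fin_fun]

section HammingWeight

variable {L : Type*} [Field L] [Algebra (ZMod 2) L] {γ : L} {n : ℕ}

theorem four_le_card_support_of_aeval_eq_zero (hγ : IsPrimitiveRoot γ n) {c : (ZMod 2)[X]}
    (hc : c ≠ 0) (hdeg : c.degree < n) (h1 : c.eval 1 = 0) (hγc : aeval γ c = 0) :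
    4 ≤ c.support.card := by
  have := charP_of_injective_algebraMap' (ZMod 2) (A := L) 2
  have heven : 2 ∣ c.support.card :=
    (ZMod.natCast_eq_zero_iff _ 2).mp (eval_one_eq_card_support c ▸ h1)
  have hne0 : c.support.card ≠ 0 := by simpa using hc
  have hne2 : c.support.card ≠ 2 := by
    intro h2
    obtain ⟨a, b, hab, hs⟩ := Finset.card_eq_two.mp h2
    have hlt : ∀ i ∈ c.support, i < n := fun i hi => by
      exact_mod_cast (le_degree_of_mem_supp i hi).trans_lt hdeg
    rw [aeval_eq_sum_support_pow, hs, Finset.sum_pair hab] at hγc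
    refine hab (hγ.pow_inj (hlt a (by simp [hs])) (hlt b (by simp [hs])) ?_)
    linear_combination hγc - γ ^ b * (CharTwo.two_eq_zero : (2 : L) = 0)
  omega

theorem exists_card_support_eq_four (hγ : IsPrimitiveRoot γ n) (hn : 4 ≤ n)
    (hL : ∀ x : L, x ≠ 0 → x ^ n = 1) :
    ∃ c : (ZMod 2)[X], c.degree < n ∧ c.eval 1 = 0 ∧ aeval γ c = 0 ∧ c.support.card = 4 := by
  have := charP_of_injective_algebraMap' (ZMod 2) (A := L) 2
  have two : (2 : L) = 0 := CharTwo.two_eq_zero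
  have hγ0 : γ ≠ 0 := hγ.ne_zero (by omega)
  have hγ1 : γ ≠ 1 := by simpa using hγ.pow_ne_one_of_pos_of_lt one_ne_zero (by omega)
  have hγ2 : γ ^ 2 ≠ 1 := hγ.pow_ne_one_of_pos_of_lt two_ne_zero (by omega)
  have hγ3 : γ ^ 3 ≠ 1 := hγ.pow_ne_one_of_pos_of_lt three_ne_zero (by omega)
  -- `1, γ, γ², 1 + γ + γ²` are four distinct powers of `γ` summing to `0`
  set δ := 1 + γ + γ ^ 2
  have hδ0 : δ ≠ 0 := fun h => hγ3 (by linear_combination (γ - 1) * h)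
  have : NeZero n := ⟨by omega⟩
  obtain ⟨k, hk, hγk⟩ := hγ.eq_pow_of_pow_eq_one (hL δ hδ0)
  have hk0 : k ≠ 0 := by
    rintro rfl
    exact hγ1 (mul_left_cancel₀ hγ0 (by linear_combination -hγk - γ * two))
  have hk1 : k ≠ 1 := by
    rintro rfl
    exact hγ2 (by linear_combination -hγk - two)
  have hk2 : k ≠ 2 := by
    rintro rfl
    exact hγ1 (by linear_combination -hγk - two)
  have hs : ({0, 1, 2, k} : Finset ℕ).card = 4 := by
    simp [Finset.card_insert_of_notMem, hk0, hk1, hk2, eq_comm]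
  refine ⟨∑ i ∈ {0, 1, 2, k}, X ^ i, ?_, ?_, ?_, ?_⟩
  · refine mem_degreeLT.mp (Submodule.sum_mem _ fun i hi => ?_)
    have : i < n := by simp only [Finset.mem_insert, Finset.mem_singleton] at hi; omega
    rw [mem_degreeLT, degree_X_pow]
    exact_mod_cast this
  · rw [eval_one_eq_card_support, support_sum_X_pow, hs]
    rfl
  · rw [aeval_eq_sum_support_pow, support_sum_X_pow, Finset.sum_insert (by simp [Ne.symm hk0]),
      Finset.sum_insert (by simp [Ne.symm hk1]), Finset.sum_insert (by simp [Ne.symm hk2]),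
      Finset.sum_singleton, hγk]
    linear_combination δ * two
  · rw [support_sum_X_pow, hs]

end HammingWeight

end Polynomial

theorem minpoly.isCoprime_iff_aeval_ne_zero {K L : Type*} [Field K] [Field L] [Algebra K L]
    {x : L} (hx : IsIntegral K x) {q : K[X]} :
    IsCoprime (minpoly K x) q ↔ Polynomial.aeval x q ≠ 0 := by
  rw [(minpoly.irreducible hx).coprime_iff_not_dvd, minpoly.dvd_iff]

theorem EuclideanDomain.gcd_mul_associated {R : Type*} [EuclideanDomain R] [DecidableEq R]
    {g h s : R} (hs : h ∣ s) (hg : IsCoprime g s) :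
    Associated (EuclideanDomain.gcd (g * h) s) h := by
  refine associated_of_dvd_dvd ?_ (dvd_gcd (dvd_mul_left h g) hs)
  exact (hg.of_isCoprime_of_dvd_right (gcd_dvd_right _ _)).symm.dvd_of_dvd_mul_left
    (gcd_dvd_left _ _)

theorem isCoprime_X_sub_one_minpoly {K L : Type*} [Field K] [Field L] [Algebra K L] {γ : L}
    (hγ : IsIntegral K γ) (h1 : γ ≠ 1) : IsCoprime (X - 1 : K[X]) (minpoly K γ) :=
  ((minpoly.isCoprime_iff_aeval_ne_zero hγ).mpr (by simpa [sub_eq_zero] using h1)).symm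

namespace FiniteField

variable {K L : Type*} [Field K] [Fintype K] [Field L] [Algebra K L] [Algebra.IsAlgebraic K L]

theorem frobeniusAlgEquivOfAlgebraic_pow_apply (n : ℕ) (x : L) :
    (frobeniusAlgEquivOfAlgebraic K L ^ n) x = x ^ Fintype.card K ^ n := by
  rw [AlgEquiv.coe_pow, coe_frobeniusAlgEquivOfAlgebraic_iterate]

theorem trace_pow_card_pow (n : ℕ) (x : L) :
    Algebra.trace K L (x ^ Fintype.card K ^ n) = Algebra.trace K L x := by
  rw [← frobeniusAlgEquivOfAlgebraic_pow_apply, Algebra.trace_eq_of_algEquiv]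

theorem aeval_pow_card_pow (n : ℕ) (x : L) (p : K[X]) :
    aeval (x ^ Fintype.card K ^ n) p = aeval x p ^ Fintype.card K ^ n := by
  rw [← frobeniusAlgEquivOfAlgebraic_pow_apply, ← frobeniusAlgEquivOfAlgebraic_pow_apply,
    aeval_algHom_apply]

end FiniteField

theorem geom_sum_eq_ite_of_pow_eq_one {K : Type*} [Field K] {x : K} {n : ℕ} (h : x ^ n = 1) :
    ∑ i ∈ Finset.range n, x ^ i = if x = 1 then (n : K) else 0 := by
  split_ifs with hx
  · simp [hx]
  · have := geom_sum_mul x n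
    rw [h, sub_self] at this
    exact (mul_eq_zero.mp this).resolve_right (sub_ne_zero.mpr hx)

theorem IsPrimitiveRoot.adjoin_eq_top {K L : Type*} [Field K] [Field L] [Algebra K L] {γ : L}
    {n : ℕ} [NeZero n] (hγ : IsPrimitiveRoot γ n) (hL : ∀ x : L, x ≠ 0 → x ^ n = 1) :
    IntermediateField.adjoin K {γ} = ⊤ := by
  refine eq_top_iff.mpr fun x _ => ?_
  rcases eq_or_ne x 0 with rfl | hx
  · exact zero_mem _
  obtain ⟨i, -, rfl⟩ := hγ.eq_pow_of_pow_eq_one (hL x hx)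
  exact pow_mem (IntermediateField.mem_adjoin_simple_self K γ) i

namespace GaloisField

variable {p : ℕ} [Fact p.Prime] {n : ℕ}

theorem pow_pow_eq_self (hn : n ≠ 0) (x : GaloisField p n) : x ^ p ^ n = x := by
  have := Fintype.ofFinite (GaloisField p n)
  rw [← card p n hn, Nat.card_eq_fintype_card, FiniteField.pow_card]

theorem pow_pow_sub_one_eq_one (hn : n ≠ 0) {x : GaloisField p n} (hx : x ≠ 0) :
    x ^ (p ^ n - 1) = 1 := by
  have := Fintype.ofFinite (GaloisField p n)
  rw [← card p n hn, Nat.card_eq_fintype_card, FiniteField.pow_card_sub_one_eq_one x hx]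

end GaloisField

theorem odd_two_pow_sub_one {m : ℕ} (hm : m ≠ 0) : Odd (2 ^ m - 1) :=
  Nat.Even.sub_odd Nat.one_le_two_pow (Nat.even_pow.mpr ⟨even_two, hm⟩) odd_one

theorem two_pow_lt_two_pow_sub_one {k m : ℕ} (hk : k < m) (hm : 2 ≤ m) :
    2 ^ k < 2 ^ m - 1 := by
  have h1 : 2 ^ k ≤ 2 ^ (m - 1) := Nat.pow_le_pow_right two_pos (by omega)
  have h2 : 1 < 2 ^ (m - 1) := Nat.one_lt_two_pow (by omega)
  have h3 : 2 ^ m = 2 * 2 ^ (m - 1) := by rw [← pow_succ']; congr 1; omega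
  omega

theorem one_lt_two_pow_sub_one {m : ℕ} (hm : 2 ≤ m) : 1 < 2 ^ m - 1 := by
  simpa using two_pow_lt_two_pow_sub_one (k := 0) (by omega) hm

section GaloisFieldTwo

variable {m : ℕ} {α : GaloisField 2 m} {f : GaloisField 2 m → GaloisField 2 m}

local notation "Tr" => Algebra.trace (ZMod 2) (GaloisField 2 m)

theorem trace_one_of_odd (hm : Odd m) : Tr 1 = 1 := by
  rw [← map_one (algebraMap (ZMod 2) (GaloisField 2 m)), Algebra.trace_algebraMap,
    GaloisField.finrank 2 hm.pos.ne', nsmul_eq_mul, mul_one, ZMod.natCast_eq_one_iff_odd]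
  exact hm

theorem algebraMap_trace_eq_sum_pow_two_pow (hm : m ≠ 0) (x : GaloisField 2 m) :
    algebraMap (ZMod 2) _ (Tr x) = ∑ k ∈ Finset.range m, x ^ 2 ^ k := by
  rw [FiniteField.algebraMap_trace_eq_sum_pow, GaloisField.finrank 2 hm, Nat.card_zmod]

theorem trace_pow_two_pow (k : ℕ) (x : GaloisField 2 m) : Tr (x ^ 2 ^ k) = Tr x := by
  simpa using FiniteField.trace_pow_card_pow (K := ZMod 2) k x

-- `(2 ^ m - 2 ^ h + 1) * 2 ^ h ≡ 2 * (2 ^ h - 1) [MOD 2 ^ m - 1]`: the two powers are Frobenius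
-- conjugates.
theorem trace_pow_two_pow_sub_two_pow_add_one {h : ℕ} (hmh : h + h = m + 1)
    (y : GaloisField 2 m) : Tr (y ^ (2 ^ m - 2 ^ h + 1)) = Tr (y ^ (2 ^ h - 1)) := by
  have hq2 : 2 ≤ 2 ^ h := Nat.le_self_pow (by omega) 2
  have hqN : 2 ^ h ≤ 2 ^ m := Nat.pow_le_pow_right two_pos (by omega)
  have hqq : 2 ^ h * 2 ^ h = 2 * 2 ^ m := by rw [← pow_add, hmh, pow_succ']
  have hexp : (2 ^ m - 2 ^ h + 1) * 2 ^ h = 2 ^ m * (2 ^ h - 2) + 2 ^ h := by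
    zify [hq2, hqN] at hqq ⊢
    linear_combination -hqq
  have hy : (y ^ (2 ^ m - 2 ^ h + 1)) ^ 2 ^ h = (y ^ (2 ^ h - 1)) ^ 2 ^ 1 := by
    rw [← pow_mul, hexp, pow_add, pow_mul, GaloisField.pow_pow_eq_self (by omega), ← pow_add,
      ← pow_mul]
    congr 1
    omega
  rw [← trace_pow_two_pow h, hy, trace_pow_two_pow]

theorem trace_f₁ (hm : Odd m) (y : GaloisField 2 m) :
    Tr (y + y ^ (2 ^ ((m + 1) / 2) - 1) + y ^ (2 ^ m - 2 ^ ((m + 1) / 2) + 1)) = Tr y := by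
  have hmh : (m + 1) / 2 + (m + 1) / 2 = m + 1 := by obtain ⟨c, rfl⟩ := hm; omega
  rw [map_add, map_add, trace_pow_two_pow_sub_two_pow_add_one hmh, add_assoc,
    CharTwo.add_self_eq_zero, add_zero]

theorem natCast_two_pow_sub_one (hm : m ≠ 0) : ((2 ^ m - 1 : ℕ) : GaloisField 2 m) = 1 := by
  rw [← map_natCast (algebraMap (ZMod 2) _), ZMod.natCast_eq_one_iff_odd.mpr
    (odd_two_pow_sub_one hm), map_one]

theorem aeval_traceSeqPoly (hodd : Odd m) (hα : IsPrimitiveRoot α (2 ^ m - 1))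
    (hf : ∀ y, Tr (f y) = Tr y) {β : GaloisField 2 m} (hβ : β ^ (2 ^ m - 1) = 1) :
    aeval β (traceSeqPoly m α f) =
      ∑ k ∈ Finset.range m, (if α ^ 2 ^ k * β = 1 then 1 else 0) + if β = 1 then 1 else 0 := by
  have hm : m ≠ 0 := hodd.pos.ne'
  have hterm : ∀ t, algebraMap (ZMod 2) _ (Tr (f (α ^ t + 1))) * β ^ t =
      ∑ k ∈ Finset.range m, (α ^ 2 ^ k * β) ^ t + β ^ t := by
    intro t
    rw [hf, map_add, trace_one_of_odd hodd, map_add, map_one,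
      algebraMap_trace_eq_sum_pow_two_pow hm, add_mul, one_mul, Finset.sum_mul]
    simp_rw [mul_pow, ← pow_mul, mul_comm t]
  have hgeom : ∀ γ : GaloisField 2 m, γ ^ (2 ^ m - 1) = 1 →
      ∑ t ∈ Finset.range (2 ^ m - 1), γ ^ t = if γ = 1 then 1 else 0 := fun γ hγ => by
    rw [geom_sum_eq_ite_of_pow_eq_one hγ, natCast_two_pow_sub_one hm]
  simp only [traceSeqPoly, map_sum, map_mul, aeval_C, map_pow, aeval_X, hterm,
    Finset.sum_add_distrib]
  rw [Finset.sum_comm, hgeom β hβ]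
  congr 1
  refine Finset.sum_congr rfl fun k _ => hgeom _ ?_
  rw [mul_pow, hβ, mul_one, pow_right_comm, hα.pow_eq_one, one_pow]

theorem pow_two_pow_eq_pow_iff (hm : 2 ≤ m) (hα : IsPrimitiveRoot α (2 ^ m - 1)) {k j : ℕ}
    (hk : k < m) (hj : j < 2 ^ m - 1) : α ^ 2 ^ k = α ^ j ↔ 2 ^ k = j :=
  ⟨fun h => hα.pow_inj (two_pow_lt_two_pow_sub_one hk hm) hj h, fun h => h ▸ rfl⟩

theorem aeval_one_traceSeqPoly (hm : 2 ≤ m) (hodd : Odd m)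
    (hα : IsPrimitiveRoot α (2 ^ m - 1)) (hf : ∀ y, Tr (f y) = Tr y) :
    aeval (1 : GaloisField 2 m) (traceSeqPoly m α f) = 1 := by
  rw [aeval_traceSeqPoly hodd hα hf (one_pow (M := GaloisField 2 m) _), if_pos rfl,
    add_eq_right]
  refine Finset.sum_eq_zero fun k hk => if_neg ?_
  rw [mul_one, ← pow_zero α, pow_two_pow_eq_pow_iff hm hα (Finset.mem_range.mp hk)
    (one_lt_two_pow_sub_one hm).pos]
  positivity

theorem aeval_inv_traceSeqPoly (hm : 2 ≤ m) (hodd : Odd m)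
    (hα : IsPrimitiveRoot α (2 ^ m - 1)) (hf : ∀ y, Tr (f y) = Tr y) :
    aeval α⁻¹ (traceSeqPoly m α f) = 1 := by
  have hv := one_lt_two_pow_sub_one hm
  have hα0 : α ≠ 0 := hα.ne_zero (by omega)
  have hcond : ∀ k ∈ Finset.range m, α ^ 2 ^ k * α⁻¹ = 1 ↔ k = 0 := fun k hk => by
    have := pow_two_pow_eq_pow_iff hm hα (Finset.mem_range.mp hk) hv
    rw [pow_one] at this
    rw [mul_inv_eq_one₀ hα0, this]
    simp
  rw [aeval_traceSeqPoly hodd hα hf hα.inv.pow_eq_one, if_neg (hα.inv.ne_one hv),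
    add_zero, Finset.sum_congr rfl fun k hk => if_congr (hcond k hk) rfl rfl,
    Finset.sum_ite_eq' (Finset.range m), if_pos (Finset.mem_range.mpr (by omega))]

theorem aeval_traceSeqPoly_eq_zero (hodd : Odd m) (hα : IsPrimitiveRoot α (2 ^ m - 1))
    (hf : ∀ y, Tr (f y) = Tr y) {β : GaloisField 2 m} (hβ : β ^ (2 ^ m - 1) = 1)
    (hg : aeval β ((X - 1) * minpoly (ZMod 2) α⁻¹) ≠ 0) :
    aeval β (traceSeqPoly m α f) = 0 := by
  rw [aeval_traceSeqPoly hodd hα hf hβ, if_neg, add_zero]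
  · refine Finset.sum_eq_zero fun k _ => if_neg fun hk => hg ?_
    have hβk : β = α⁻¹ ^ 2 ^ k := by rw [inv_pow, eq_inv_of_mul_eq_one_right hk]
    have := FiniteField.aeval_pow_card_pow (K := ZMod 2) k α⁻¹ (minpoly (ZMod 2) α⁻¹)
    rw [ZMod.card, minpoly.aeval, zero_pow (by positivity)] at this
    rw [map_mul, hβk, this, mul_zero]
  · rintro rfl
    simp at hg

theorem natDegree_minpoly_of_isPrimitiveRoot (hm : m ≠ 0) {γ : GaloisField 2 m}
    (hγ : IsPrimitiveRoot γ (2 ^ m - 1)) : (minpoly (ZMod 2) γ).natDegree = m := by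
  have : NeZero (2 ^ m - 1) := ⟨(odd_two_pow_sub_one hm).pos.ne'⟩
  rw [← IntermediateField.adjoin.finrank (.of_finite _ γ),
    hγ.adjoin_eq_top fun x hx => GaloisField.pow_pow_sub_one_eq_one hm hx,
    IntermediateField.finrank_top', GaloisField.finrank 2 hm]

theorem natDegree_X_sub_one_mul_minpoly (hm : m ≠ 0) (hα : IsPrimitiveRoot α (2 ^ m - 1)) :
    ((X - 1) * minpoly (ZMod 2) α⁻¹).natDegree = m + 1 := by
  rw [natDegree_mul (by simpa using X_sub_C_ne_zero (1 : ZMod 2))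
    (minpoly.ne_zero (.of_finite _ _)), natDegree_minpoly_of_isPrimitiveRoot hm hα.inv, add_comm]
  simpa using natDegree_X_sub_C (1 : ZMod 2)

theorem X_sub_one_mul_minpoly_dvd_iff (hα : IsPrimitiveRoot α (2 ^ m - 1)) (hv : 1 < 2 ^ m - 1)
    {c : (ZMod 2)[X]} :
    (X - 1) * minpoly (ZMod 2) α⁻¹ ∣ c ↔ c.eval 1 = 0 ∧ aeval α⁻¹ c = 0 := by
  rw [← minpoly.dvd_iff, ← IsRoot, ← dvd_iff_isRoot, C_1]
  exact ⟨fun h => ⟨(dvd_mul_right _ _).trans h, (dvd_mul_left _ _).trans h⟩, fun ⟨h1, h2⟩ =>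
    (isCoprime_X_sub_one_minpoly (.of_finite _ _) (hα.inv.ne_one hv)).mul_dvd h1 h2⟩

theorem genPoly_eq_X_sub_one_mul_minpoly (hm : 2 ≤ m) (hodd : Odd m)
    (hα : IsPrimitiveRoot α (2 ^ m - 1)) (hf : ∀ y, Tr (f y) = Tr y) :
    genPoly m α f = (X - 1) * minpoly (ZMod 2) α⁻¹ := by
  have hv := one_lt_two_pow_sub_one hm
  obtain ⟨h, hP⟩ : (X - 1) * minpoly (ZMod 2) α⁻¹ ∣ (X ^ (2 ^ m - 1) - 1 : (ZMod 2)[X]) := by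
    refine (X_sub_one_mul_minpoly_dvd_iff hα hv).mpr ⟨by simp, by simp [hα.inv.pow_eq_one]⟩
  have hsep : ((X - 1) * minpoly (ZMod 2) α⁻¹ * h).Separable :=
    hP ▸ X_pow_sub_one_separable_iff.mpr
      (ZMod.natCast_ne_zero_iff_odd.mpr (odd_two_pow_sub_one (by omega)))
  have hsplit : (h.map (algebraMap (ZMod 2) (GaloisField 2 m))).Splits := by
    have : ((X ^ (2 ^ m - 1) - 1 : (ZMod 2)[X]).map
        (algebraMap (ZMod 2) (GaloisField 2 m))).Splits := by
      simpa using X_pow_sub_C_splits_of_isPrimitiveRoot hα (one_pow _)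
    exact this.of_dvd (map_ne_zero (hP ▸ hsep.ne_zero))
      (Polynomial.map_dvd _ (hP ▸ dvd_mul_left h _))
  -- a root of `h` is a root of unity, and not a root of `(X - 1) * m_{α⁻¹}` by separability
  have hhS : h ∣ traceSeqPoly m α f := by
    refine dvd_of_forall_aeval_eq_zero hsplit hsep.of_mul_right fun β hβ => ?_
    have hβv : aeval β (X ^ (2 ^ m - 1) - 1 : (ZMod 2)[X]) = 0 := by
      rw [hP, map_mul, hβ, mul_zero]
    refine aeval_traceSeqPoly_eq_zero hodd hα hf (by simpa [sub_eq_zero] using hβv) ?_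
    exact (aeval_ne_zero_of_isCoprime hsep.isCoprime β).resolve_right (not_not.mpr hβ)
  have hgS : IsCoprime ((X - 1) * minpoly (ZMod 2) α⁻¹) (traceSeqPoly m α f) := by
    refine IsCoprime.mul_left ?_ ?_
    · rw [← minpoly.one (A := ZMod 2) (B := GaloisField 2 m),
        minpoly.isCoprime_iff_aeval_ne_zero isIntegral_one, aeval_one_traceSeqPoly hm hodd hα hf]
      exact one_ne_zero
    · rw [minpoly.isCoprime_iff_aeval_ne_zero (.of_finite _ _),
        aeval_inv_traceSeqPoly hm hodd hα hf]
      exact one_ne_zero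
  rw [genPoly, hP, eq_of_associated_zmod_two (EuclideanDomain.gcd_mul_associated hhS hgS),
    mul_div_cancel_right₀ _ hsep.of_mul_right.ne_zero]

theorem mem_codeC_iff {c : (ZMod 2)[X]} :
    c ∈ codeC m α f ↔ c.degree < ((2 ^ m - 1 : ℕ) : WithBot ℕ) ∧ genPoly m α f ∣ c := by
  simp [codeC, mem_degreeLT, Ideal.mem_span_singleton]

end GaloisFieldTwo

/-- Theorem 1: for f₁(x) = x + x^{2^{(m+1)/2}−1} + x^{2^m−2^{(m+1)/2}+1} over 𝔽_{2^m},
m ≥ 3 odd, the minimal polynomial of the sequence s_t = Tr(f₁(α^t+1)) is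
(x−1)·m_{α^{−1}}(x) of degree m+1; the code C_s has length 2^m−1,
dimension 2^m−2−m, and minimum distance exactly 4. -/
theorem stmt1 (m : ℕ) (hm3 : 3 ≤ m) (hmo : Odd m)
    (α : GaloisField 2 m) (hα : orderOf α = 2 ^ m - 1)
    (f : GaloisField 2 m → GaloisField 2 m)
    (hf : ∀ x, f x = x + x ^ (2 ^ ((m + 1) / 2) - 1) +
        x ^ (2 ^ m - 2 ^ ((m + 1) / 2) + 1)) :
    genPoly m α f = (X - 1) * minpoly (ZMod 2) α⁻¹ ∧
    (genPoly m α f).natDegree = m + 1 ∧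
    Module.finrank (ZMod 2) ↥(codeC m α f) = 2 ^ m - 2 - m ∧
    IsLeast (wtSet (codeC m α f)) 4 := by
  have hprim : IsPrimitiveRoot α (2 ^ m - 1) := hα ▸ IsPrimitiveRoot.orderOf α
  have hv : m + 2 ≤ 2 ^ m := by
    have h1 := two_pow_lt_two_pow_sub_one (k := m - 1) (m := m) (by omega) (by omega)
    have h2 : m - 1 < 2 ^ (m - 1) := Nat.lt_two_pow_self
    omega
  have hgen := genPoly_eq_X_sub_one_mul_minpoly (f := f) (by omega) hmo hprim
    fun y => by rw [hf]; exact trace_f₁ hmo y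
  have hdeg := natDegree_X_sub_one_mul_minpoly (by omega) hprim
  have hmem : ∀ c, c ∈ codeC m α f ↔
      c.degree < ((2 ^ m - 1 : ℕ) : WithBot ℕ) ∧ c.eval 1 = 0 ∧ aeval α⁻¹ c = 0 := fun c => by
    rw [mem_codeC_iff, hgen, X_sub_one_mul_minpoly_dvd_iff hprim (by omega)]
  refine ⟨hgen, hgen ▸ hdeg, ?_, ?_, ?_⟩
  · have hg0 : (X - 1) * minpoly (ZMod 2) α⁻¹ ≠ 0 := by rintro h; simp [h] at hdeg
    rw [codeC, hgen, finrank_degreeLT_inf_span_singleton hg0 (by omega), hdeg]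
    omega
  · obtain ⟨c, hc⟩ := exists_card_support_eq_four hprim.inv (by omega)
      fun x hx => GaloisField.pow_pow_sub_one_eq_one (by omega) hx
    exact ⟨c, (hmem c).mpr ⟨hc.1, hc.2.1, hc.2.2.1⟩, by rintro rfl; simp at hc, hc.2.2.2⟩
  · rintro w ⟨c, hc, hc0, rfl⟩
    obtain ⟨hdeg, h1, hγ⟩ := (hmem c).mp hc
    exact four_le_card_support_of_aeval_eq_zero hprim.inv hc0 hdeg h1 hγ
end

section
/- Let m = 2h + 1 ≥ 7 be odd. Then for every x ∈ 𝔽_{2^m}, Tr((x+1)^{3·2^{(m+1)/2} + 4} + (x+1)^{2^{(m+1)/2} + 2} + (x+1)^{2^{(m+1)/2}}) = Tr(x^{2^h + 2^{h−1} + 1} + x^{2^{h−1} + 1} + x^3) + 1. -/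
noncomputable def frobAlg (m : ℕ) : GaloisField 2 m ≃ₐ[ZMod 2] GaloisField 2 m :=
  AlgEquiv.ofRingEquiv (f := frobeniusEquiv (GaloisField 2 m) 2) (fun c => by
    show frobenius (GaloisField 2 m) 2 _ = _
    rw [frobenius_def, ← map_pow, ZMod.pow_card])

lemma frobAlg_apply (m : ℕ) (a : GaloisField 2 m) : frobAlg m a = a ^ 2 := rfl

lemma tr_sq (m : ℕ) (a : GaloisField 2 m) :
    Algebra.trace (ZMod 2) (GaloisField 2 m) (a ^ 2) =
      Algebra.trace (ZMod 2) (GaloisField 2 m) a := by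
  have := Algebra.trace_eq_of_algEquiv (frobAlg m) a
  rwa [frobAlg_apply] at this

lemma tr_pow2 (m n : ℕ) (a : GaloisField 2 m) :
    Algebra.trace (ZMod 2) (GaloisField 2 m) (a ^ (2 ^ n)) =
      Algebra.trace (ZMod 2) (GaloisField 2 m) a := by
  induction n with
  | zero => simp
  | succ n ih =>
      rw [pow_succ, pow_mul, tr_sq, ih]

/-- Let m = 2h + 1 ≥ 7 be odd. Then for every x ∈ 𝔽_{2^m},
Tr((x+1)^{3·2^{(m+1)/2}+4} + (x+1)^{2^{(m+1)/2}+2} + (x+1)^{2^{(m+1)/2}})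
  = Tr(x^{2^h + 2^{h−1} + 1} + x^{2^{h−1} + 1} + x^3) + 1. -/
theorem stmt2 (m h : ℕ) (hm : m = 2 * h + 1) (hm7 : 7 ≤ m) (x : GaloisField 2 m) :
    Algebra.trace (ZMod 2) (GaloisField 2 m)
        ((x + 1) ^ (3 * 2 ^ ((m + 1) / 2) + 4) +
          (x + 1) ^ (2 ^ ((m + 1) / 2) + 2) + (x + 1) ^ (2 ^ ((m + 1) / 2))) =
      Algebra.trace (ZMod 2) (GaloisField 2 m)
          (x ^ (2 ^ h + 2 ^ (h - 1) + 1) + x ^ (2 ^ (h - 1) + 1) + x ^ 3) + 1 := by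
  obtain ⟨k, hk⟩ : ∃ k, h = k + 1 := ⟨h - 1, by omega⟩
  set u : ℕ := 2 ^ k with hu
  have e1 : 2 ^ ((m + 1) / 2) = u * 4 := by
    have : (m + 1) / 2 = k + 2 := by omega
    rw [this, hu]; ring
  have e2 : 2 ^ h = u * 2 := by rw [hk, hu]; ring
  have e3 : 2 ^ (h - 1) = u := by rw [hk, hu]; simp
  rw [e1, e2, e3]
  -- reduce LHS via Tr(a^2) = Tr(a)
  have l1 : 3 * (u * 4) + 4 = (6 * u + 2) * 2 := by ring
  have l2 : u * 4 + 2 = (2 * u + 1) * 2 := by ring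
  have l3 : u * 4 = (2 * u) * 2 := by ring
  rw [l1, l2, l3, pow_mul, pow_mul, pow_mul, map_add, map_add,
    tr_sq, tr_sq, tr_sq, ← map_add, ← map_add]
  -- Frobenius expansion of (x+1)^(2*u)
  have htwo : (2 : GaloisField 2 m) = 0 := by
    exact_mod_cast CharP.cast_eq_zero (GaloisField 2 m) 2
  have hfrob : (x + 1) ^ (2 * u) = x ^ (2 * u) + 1 := by
    have : (2 : ℕ) * u = 2 ^ (k + 1) := by rw [hu]; ring
    rw [this, add_pow_char_pow, one_pow]
  have hz : (x + 1) ^ (6 * u + 2) + (x + 1) ^ (2 * u + 1) + (x + 1) ^ (2 * u)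
      = (x ^ (2 * u) + 1) ^ 3 * (x + 1) ^ 2 + (x ^ (2 * u) + 1) * (x + 1)
          + (x ^ (2 * u) + 1) := by
    rw [← hfrob, ← pow_mul]
    rw [show (2 * u) * 3 = 6 * u by ring]
    ring
  rw [hz]
  -- the middle identity in char 2
  have key : (x ^ (2 * u) + 1) ^ 3 * (x + 1) ^ 2 + (x ^ (2 * u) + 1) * (x + 1)
        + (x ^ (2 * u) + 1)
      = (x ^ (u * 2 + u + 1) + x ^ (u + 1) + x ^ 3) + 1 +
        (((x ^ (3 * u + 1)) ^ 2 + x ^ (3 * u + 1)) +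
         ((x ^ (2 * u + 1)) ^ 2 + x ^ (2 * u + 1)) +
         ((x ^ (u + 1)) ^ 2 + x ^ (u + 1)) +
         ((x ^ (2 * u)) ^ 2 + x ^ (2 * u)) +
         (x ^ 2 + x) +
         ((x ^ 3) ^ (2 ^ (k + 1)) + x ^ 3)) := by
    have hp : (2:ℕ) ^ (k + 1) = 2 * u := by rw [hu]; ring
    rw [hp]
    linear_combination (x ^ (6 * u + 1) + x ^ (4 * u + 2) + 3 * x ^ (4 * u + 1)
      + x ^ (4 * u) + x ^ (2 * u + 2) + 3 * x ^ (2 * u + 1) + 2 * x ^ (2 * u)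
      + x + 1 - x ^ (3 * u + 1) - x ^ (u + 1) - x ^ 3) * htwo
  rw [key, map_add, map_add]
  -- trace of 1 is 1
  have t1 : Algebra.trace (ZMod 2) (GaloisField 2 m) 1 = 1 := by
    have h1 := Algebra.trace_algebraMap (R := ZMod 2) (S := GaloisField 2 m) 1
    rw [map_one] at h1
    rw [h1, GaloisField.finrank 2 (show m ≠ 0 by omega), hm, nsmul_eq_mul, mul_one]
    push_cast
    rw [show ((2:ZMod 2)) = 0 from by decide]
    ring
  -- trace of the pair-sum is 0
  have pair : ∀ a : GaloisField 2 m,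
      Algebra.trace (ZMod 2) (GaloisField 2 m) (a ^ 2 + a) = 0 := by
    intro a
    rw [map_add, tr_sq]
    exact CharTwo.add_self_eq_zero _
  have last : Algebra.trace (ZMod 2) (GaloisField 2 m)
      ((x ^ 3) ^ (2 ^ (k + 1)) + x ^ 3) = 0 := by
    rw [map_add, tr_pow2]
    exact CharTwo.add_self_eq_zero _
  have pairx : Algebra.trace (ZMod 2) (GaloisField 2 m) (x ^ 2 + x) = 0 := pair x
  simp only [map_add, t1]
  simp only [map_add] at pair pairx last
  rw [pair, pair, pair, pair]
  rw [pairx, last]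
  ring
end

section
/- Let m ≥ 5 be odd, h = (m−1)/2, and A = {1, 2, …, 2^{h−1} − 1}. For any i, j ∈ A with i ≠ j, the 2-cyclotomic cosets modulo 2^m − 1 satisfy C_{i+2^h} ∩ C_{j+2^h} = ∅. -/
/-!
Modulo `2 ^ n - 1`, doubling rotates the `n`-bit binary expansion cyclically. A number in
`[2 ^ h, 2 ^ (h + 1))` with `2 * h + 1 ≤ n` has its top `n - h - 1 ≥ h` bits equal to zero, so a
rotation by `1 ≤ u ≤ n - h - 1` lands in `[2 ^ (h + 1), 2 ^ n - 1)`, beyond that interval, while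
a rotation by `u > n - h - 1` is the inverse of a rotation by `n - u ≤ h`. Hence distinct
numbers of the interval lie in distinct cyclotomic cosets, and `i + 2 ^ h` with
`i < 2 ^ (h - 1)` is such a number.
-/

/-- The 2-cyclotomic coset of i modulo v:
    C_i = {i·2^s mod v : s = 0, 1, 2, …} ⊆ Z_v. -/
def cosetC (v i : ℕ) : Set ℕ := {x | ∃ s : ℕ, x = i * 2 ^ s % v}

lemma ZMod.two_pow_eq_one (n : ℕ) : (2 : ZMod (2 ^ n - 1)) ^ n = 1 := by
  have h := ZMod.natCast_self (2 ^ n - 1)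
  push_cast [Nat.one_le_two_pow] at h
  linear_combination h

lemma exists_lt_eq_mul_pow_of_mul_pow_eq {M : Type*} [CommMonoid M] {g a b : M} {n s t : ℕ}
    (hg : g ^ n = 1) (hn : 0 < n) (h : a * g ^ s = b * g ^ t) : ∃ u < n, a = b * g ^ u := by
  refine ⟨(t + (n - 1) * s) % n, Nat.mod_lt _ hn, ?_⟩
  calc a = a * g ^ (n * s) := by rw [pow_mul, hg, one_pow, mul_one]
    _ = a * g ^ s * g ^ ((n - 1) * s) := by
      rw [mul_assoc, ← pow_add, Nat.sub_one_mul,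
        Nat.add_sub_cancel' (Nat.le_mul_of_pos_left s hn)]
    _ = b * g ^ ((t + (n - 1) * s) % n) := by
      rw [h, mul_assoc, ← pow_add, ← pow_eq_pow_mod _ hg]

lemma natCast_ne_mul_two_pow {n h a b u : ℕ} (hu : 1 ≤ u) (hun : h + 1 + u ≤ n)
    (ha : a < 2 ^ (h + 1)) (hb : b ∈ Set.Ico (2 ^ h) (2 ^ (h + 1))) :
    (a : ZMod (2 ^ n - 1)) ≠ b * 2 ^ u := by
  obtain ⟨hb₀, hb₁⟩ := hb
  have h2u : 2 ≤ 2 ^ u := Nat.le_self_pow (by omega) 2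
  have hlow : 2 ^ (h + 1) ≤ b * 2 ^ u := by
    rw [pow_succ]; exact Nat.mul_le_mul hb₀ h2u
  have hhigh : b * 2 ^ u < 2 ^ n - 1 := by
    have : 2 ^ (h + 1) * 2 ^ u ≤ 2 ^ n := by
      rw [← pow_add]; exact Nat.pow_le_pow_right (by norm_num) hun
    have : (b + 1) * 2 ^ u ≤ 2 ^ (h + 1) * 2 ^ u := Nat.mul_le_mul_right _ hb₁
    rw [add_mul] at this
    omega
  have hcast : ((b * 2 ^ u : ℕ) : ZMod (2 ^ n - 1)) = b * 2 ^ u := by push_cast; rfl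
  rw [← hcast, Ne, ZMod.natCast_eq_natCast_iff', Nat.mod_eq_of_lt (by omega),
    Nat.mod_eq_of_lt hhigh]
  omega

lemma eq_of_natCast_eq_mul_two_pow {n h a b u : ℕ} (hn : 2 * h + 1 ≤ n) (hu : u < n)
    (ha : a ∈ Set.Ico (2 ^ h) (2 ^ (h + 1))) (hb : b ∈ Set.Ico (2 ^ h) (2 ^ (h + 1)))
    (hab : (a : ZMod (2 ^ n - 1)) = b * 2 ^ u) : a = b := by
  rcases Nat.eq_zero_or_pos u with rfl | hu₀
  · have : 2 ^ h < 2 ^ n := Nat.pow_lt_pow_right (by norm_num) (by omega)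
    rw [pow_zero, mul_one, ZMod.natCast_eq_natCast_iff] at hab
    refine hab.eq_of_abs_lt (abs_sub_lt_iff.mpr ?_)
    rw [Set.mem_Ico, pow_succ] at ha hb
    omega
  rcases le_or_gt (h + 1 + u) n with hun | hun
  · exact absurd hab (natCast_ne_mul_two_pow hu₀ hun ha.2 hb)
  · have hba : (b : ZMod (2 ^ n - 1)) = a * 2 ^ (n - u) := by
      rw [hab, mul_assoc, ← pow_add, Nat.add_sub_cancel' hu.le, ZMod.two_pow_eq_one, mul_one]
    exact absurd hba (natCast_ne_mul_two_pow (by omega) (by omega) hb.2 ha)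

lemma cosetC_inter_eq_empty {n h a b : ℕ} (hn : 2 * h + 1 ≤ n)
    (ha : a ∈ Set.Ico (2 ^ h) (2 ^ (h + 1))) (hb : b ∈ Set.Ico (2 ^ h) (2 ^ (h + 1)))
    (hab : a ≠ b) : cosetC (2 ^ n - 1) a ∩ cosetC (2 ^ n - 1) b = ∅ := by
  rw [Set.eq_empty_iff_forall_notMem]
  rintro x ⟨⟨s, rfl⟩, ⟨t, ht⟩⟩
  have hst : (a : ZMod (2 ^ n - 1)) * 2 ^ s = b * 2 ^ t := by
    simpa using congrArg (Nat.cast : ℕ → ZMod (2 ^ n - 1)) ht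
  obtain ⟨u, hu, hau⟩ :=
    exists_lt_eq_mul_pow_of_mul_pow_eq (ZMod.two_pow_eq_one n) (by omega) hst
  exact hab (eq_of_natCast_eq_mul_two_pow hn hu ha hb hau)

theorem stmt7_general (m h : ℕ) (hm5 : 5 ≤ m) (hh : h = (m - 1) / 2)
    (i j : ℕ) (hi2 : i ≤ 2 ^ (h - 1) - 1)
    (hj2 : j ≤ 2 ^ (h - 1) - 1) (hij : i ≠ j) :
    cosetC (2 ^ m - 1) (i + 2 ^ h) ∩ cosetC (2 ^ m - 1) (j + 2 ^ h) = ∅ := by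
  have hpow : 2 ^ (h - 1) ≤ 2 ^ h := Nat.pow_le_pow_right (by norm_num) (Nat.sub_le h 1)
  have hmem : ∀ k ≤ 2 ^ (h - 1) - 1, k + 2 ^ h ∈ Set.Ico (2 ^ h) (2 ^ (h + 1)) := by
    intro k hk
    rw [Set.mem_Ico, pow_succ]
    omega
  exact cosetC_inter_eq_empty (by omega) (hmem i hi2) (hmem j hj2) (by omega)

/-- Let m ≥ 5 be odd, h = (m−1)/2, and A = {1, …, 2^{h−1} − 1}. For any
i, j ∈ A with i ≠ j, C_{i+2^h} ∩ C_{j+2^h} = ∅ (cosets modulo 2^m − 1). -/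
theorem stmt7 (m h : ℕ) (hmo : Odd m) (hm5 : 5 ≤ m) (hh : h = (m - 1) / 2)
    (i j : ℕ) (hi1 : 1 ≤ i) (hi2 : i ≤ 2 ^ (h - 1) - 1)
    (hj1 : 1 ≤ j) (hj2 : j ≤ 2 ^ (h - 1) - 1) (hij : i ≠ j) :
    cosetC (2 ^ m - 1) (i + 2 ^ h) ∩ cosetC (2 ^ m - 1) (j + 2 ^ h) = ∅ :=
  stmt7_general m h hm5 hh i j hi2 hj2 hij
end

section
/- Let m ≥ 5 be odd, h = (m−1)/2, and A = {1, 2, …, 2^{h−1} − 1}. For any i ∈ A and any odd j ∈ A, the 2-cyclotomic cosets modulo 2^m − 1 satisfy: C_{i+2^h} ∩ C_j = C_j if there exist s ∈ {2, 3, …, h−2} and an odd integer i₁ with 1 ≤ i₁ ≤ 2^{h−1−s} − 1 such that i = 2^s·i₁ and j = i₁ + 2^{h−s}; otherwise C_{i+2^h} ∩ C_j = ∅. -/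
theorem mod_mem_cosetC (v a : ℕ) : a % v ∈ cosetC v a := ⟨0, by simp⟩

theorem cosetC_mod (v a : ℕ) : cosetC v (a % v) = cosetC v a := by
  ext x
  simp only [cosetC, Set.mem_ofPred_eq, Nat.mod_mul_mod]

theorem cosetC_mul_two_pow {v : ℕ} (hv : Odd v) (a s : ℕ) :
    cosetC v (a * 2 ^ s) = cosetC v a := by
  ext x
  constructor
  · rintro ⟨u, rfl⟩
    exact ⟨s + u, by rw [mul_assoc, ← pow_add]⟩
  · rintro ⟨u, rfl⟩
    obtain ⟨k, hk⟩ : ∃ k, v.totient = k + 1 :=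
      Nat.exists_eq_add_one_of_ne_zero (Nat.totient_pos.mpr hv.pos).ne'
    have hφ : 2 ^ (k + 1) ≡ 1 [MOD v] := hk ▸ Nat.ModEq.pow_totient (Nat.coprime_two_left.mpr hv)
    refine ⟨u + k * s, ?_⟩
    calc a * 2 ^ u % v = a * 2 ^ u * (2 ^ (k + 1)) ^ s % v :=
          ((((hφ.pow s).trans (by rw [one_pow])).mul_left (a * 2 ^ u)).trans (by rw [mul_one])).symm
      _ = a * 2 ^ s * 2 ^ (u + k * s) % v := by congr 1; ring

theorem cosetC_eq_of_mem {v a x : ℕ} (hv : Odd v) (hx : x ∈ cosetC v a) :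
    cosetC v x = cosetC v a := by
  obtain ⟨s, rfl⟩ := hx
  rw [cosetC_mod, cosetC_mul_two_pow hv]

theorem two_pow_modEq_two_pow_mod (m c : ℕ) : 2 ^ c ≡ 2 ^ (c % m) [MOD 2 ^ m - 1] :=
  calc 2 ^ c = (2 ^ m) ^ (c / m) * 2 ^ (c % m) := by rw [← pow_mul, ← pow_add, Nat.div_add_mod]
    _ ≡ 1 ^ (c / m) * 2 ^ (c % m) [MOD 2 ^ m - 1] :=
      ((Nat.modEq_sub Nat.one_le_two_pow).pow _).mul_right _
    _ = 2 ^ (c % m) := by rw [one_pow, one_mul]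

theorem exists_lt_of_mem_cosetC {m a x : ℕ} (hm : 0 < m) (hx : x ∈ cosetC (2 ^ m - 1) a) :
    ∃ t < m, x ≡ a * 2 ^ t [MOD 2 ^ m - 1] := by
  obtain ⟨s, rfl⟩ := hx
  exact ⟨s % m, Nat.mod_lt s hm, (Nat.mod_modEq _ _).trans ((two_pow_modEq_two_pow_mod m s).mul_left a)⟩

theorem add_two_pow_eq_mul_two_pow_of_modEq {h i j t : ℕ} (hh : 0 < h) (hi : i < 2 ^ (h - 1))
    (hj : j < 2 ^ (h - 1)) (ht : t < 2 * h + 1)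
    (hmod : i + 2 ^ h ≡ j * 2 ^ t [MOD 2 ^ (2 * h + 1) - 1]) : i + 2 ^ h = j * 2 ^ t := by
  have hpow : 2 ^ h = 2 * 2 ^ (h - 1) := by rw [← pow_succ', Nat.sub_add_cancel hh]
  have hv : 2 ^ (2 * h + 1) = 2 ^ (h - 1) * 2 ^ (h + 2) := by rw [← pow_add]; congr 1; omega
  have hjv : j * 2 ^ (h + 2) + 2 ^ (h + 2) ≤ 2 ^ (2 * h + 1) := by
    have := Nat.mul_le_mul_right (2 ^ (h + 2)) (Nat.succ_le_of_lt hj)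
    rwa [Nat.succ_mul, ← hv] at this
  have hpow_add_two : 2 ^ (h + 2) = 8 * 2 ^ (h - 1) := by
    rw [show h + 2 = 3 + (h - 1) by omega, pow_add]; rfl
  rcases le_or_gt t (h + 2) with hth | hth
  · have : j * 2 ^ t ≤ j * 2 ^ (h + 2) := Nat.mul_le_mul_left _ (Nat.pow_le_pow_right two_pos hth)
    refine hmod.eq_of_lt_of_lt ?_ ?_ <;> omega
  · obtain ⟨u, rfl⟩ := Nat.exists_eq_add_of_lt hth
    have hrot : (i + 2 ^ h) * 2 ^ (h - 2 - u) ≡ j [MOD 2 ^ (2 * h + 1) - 1] :=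
      calc (i + 2 ^ h) * 2 ^ (h - 2 - u) ≡ j * 2 ^ (h + 2 + u + 1) * 2 ^ (h - 2 - u)
            [MOD 2 ^ (2 * h + 1) - 1] := hmod.mul_right _
        _ = j * 2 ^ (2 * h + 1) := by rw [mul_assoc, ← pow_add]; congr 2; omega
        _ ≡ j * 1 [MOD 2 ^ (2 * h + 1) - 1] := (Nat.modEq_sub Nat.one_le_two_pow).mul_left _
        _ = j := mul_one j
    have hsmall : (i + 2 ^ h) * 2 ^ (h - 2 - u) < 2 ^ (2 * h + 1) - 1 :=
      calc (i + 2 ^ h) * 2 ^ (h - 2 - u) < 2 ^ (h + 1) * 2 ^ (h - 2 - u) :=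
            Nat.mul_lt_mul_of_pos_right (by rw [pow_succ]; omega) (by positivity)
        _ ≤ 2 ^ (2 * h - 1) := by rw [← pow_add]; exact Nat.pow_le_pow_right two_pos (by omega)
        _ < 2 ^ (2 * h + 1) - 1 := by
          rw [show 2 * h + 1 = 2 * h - 1 + 2 by omega, pow_add]
          have := @Nat.one_le_two_pow (2 * h - 1)
          omega
    have hbig : 2 ^ h ≤ (i + 2 ^ h) * 2 ^ (h - 2 - u) :=
      (Nat.le_add_left _ i).trans (Nat.le_mul_of_pos_right _ (by positivity))
    have := hrot.eq_of_lt_of_lt hsmall (by omega)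
    omega

theorem exists_of_add_two_pow_eq_mul_two_pow {h i j t : ℕ} (hi0 : 0 < i) (hi : i < 2 ^ (h - 1))
    (hj : j < 2 ^ (h - 1)) (hjodd : Odd j) (heq : i + 2 ^ h = j * 2 ^ t) :
    2 ≤ t ∧ t ≤ h - 2 ∧ ∃ i₁ : ℕ, Odd i₁ ∧ 1 ≤ i₁ ∧
      i₁ ≤ 2 ^ (h - 1 - t) - 1 ∧ i = 2 ^ t * i₁ ∧ j = i₁ + 2 ^ (h - t) := by
  have hth : t < h := by
    by_contra! hht
    have hdvd : 2 ^ h ∣ i := by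
      rw [← Nat.dvd_add_left (dvd_refl (2 ^ h)), heq]
      exact (pow_dvd_pow 2 hht).mul_left j
    have := Nat.le_of_dvd hi0 hdvd
    have := Nat.pow_le_pow_right two_pos (Nat.sub_le h 1)
    omega
  have hsplit : 2 ^ h = 2 ^ t * 2 ^ (h - t) := by rw [← pow_add, Nat.add_sub_cancel' hth.le]
  have hi_eq : i = 2 ^ t * (j - 2 ^ (h - t)) := by
    rw [Nat.mul_sub, mul_comm, ← heq, ← hsplit, Nat.add_sub_cancel]
  have hi₁ : 0 < j - 2 ^ (h - t) := Nat.pos_of_mul_pos_left (hi_eq ▸ hi0)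
  have hi₁lt : j - 2 ^ (h - t) < 2 ^ (h - 1 - t) := by
    refine Nat.lt_of_mul_lt_mul_left (a := 2 ^ t) ?_
    rwa [← hi_eq, ← pow_add, Nat.add_sub_cancel' (by omega)]
  have ht2 : 2 ≤ t := by
    have : 2 ^ (h - t) < 2 ^ (h - 1) := by omega
    have := (Nat.pow_lt_pow_iff_right one_lt_two).mp this
    omega
  have hth2 : t ≤ h - 2 := by
    by_contra! hc
    rw [show h - 1 - t = 0 by omega, pow_zero] at hi₁lt
    omega
  refine ⟨ht2, hth2, j - 2 ^ (h - t),
    Nat.Odd.sub_even (by omega) hjodd (Nat.even_pow.mpr ⟨even_two, by omega⟩), hi₁, by omega,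
    hi_eq, by omega⟩

theorem stmt8_general (m h : ℕ) (hmo : Odd m) (hh : h = (m - 1) / 2)
    (i j : ℕ) (hi1 : 1 ≤ i) (hi2 : i ≤ 2 ^ (h - 1) - 1)
    (hj2 : j ≤ 2 ^ (h - 1) - 1) (hjodd : Odd j) :
    ((∃ s : ℕ, 2 ≤ s ∧ s ≤ h - 2 ∧ ∃ i₁ : ℕ, Odd i₁ ∧ 1 ≤ i₁ ∧
        i₁ ≤ 2 ^ (h - 1 - s) - 1 ∧ i = 2 ^ s * i₁ ∧ j = i₁ + 2 ^ (h - s)) →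
      cosetC (2 ^ m - 1) (i + 2 ^ h) ∩ cosetC (2 ^ m - 1) j =
        cosetC (2 ^ m - 1) j) ∧
    (¬ (∃ s : ℕ, 2 ≤ s ∧ s ≤ h - 2 ∧ ∃ i₁ : ℕ, Odd i₁ ∧ 1 ≤ i₁ ∧
        i₁ ≤ 2 ^ (h - 1 - s) - 1 ∧ i = 2 ^ s * i₁ ∧ j = i₁ + 2 ^ (h - s)) →
      cosetC (2 ^ m - 1) (i + 2 ^ h) ∩ cosetC (2 ^ m - 1) j = ∅) := by
  obtain rfl : m = 2 * h + 1 := by obtain ⟨k, rfl⟩ := hmo; omega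
  have hv : Odd (2 ^ (2 * h + 1) - 1) :=
    Nat.Even.sub_odd Nat.one_le_two_pow (Nat.even_pow.mpr ⟨even_two, by omega⟩) odd_one
  constructor
  · rintro ⟨s, -, hs, i₁, -, -, -, rfl, rfl⟩
    have hshift : 2 ^ s * i₁ + 2 ^ h = (i₁ + 2 ^ (h - s)) * 2 ^ s := by
      rw [add_mul, ← pow_add, Nat.sub_add_cancel (by omega), mul_comm]
    rw [hshift, cosetC_mul_two_pow hv, Set.inter_self]
  · intro hne
    refine Set.eq_empty_of_forall_notMem fun x ⟨hxi, hxj⟩ => hne ?_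
    have h0 : 0 < h := Nat.pos_of_ne_zero (by rintro rfl; simp at hi2; omega)
    have hi : i < 2 ^ (h - 1) := by have := @Nat.one_le_two_pow (h - 1); omega
    have hj : j < 2 ^ (h - 1) := by have := @Nat.one_le_two_pow (h - 1); omega
    have hC : cosetC _ (i + 2 ^ h) = cosetC _ j :=
      (cosetC_eq_of_mem hv hxi).symm.trans (cosetC_eq_of_mem hv hxj)
    obtain ⟨t, ht, hmod⟩ := exists_lt_of_mem_cosetC (by omega) (hC ▸ mod_mem_cosetC _ (i + 2 ^ h))
    exact ⟨t, exists_of_add_two_pow_eq_mul_two_pow hi1 hi hj hjodd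
      (add_two_pow_eq_mul_two_pow_of_modEq h0 hi hj ht ((Nat.mod_modEq _ _).symm.trans hmod))⟩

/-- Let m ≥ 5 be odd, h = (m−1)/2, and A = {1, …, 2^{h−1} − 1}. For i ∈ A and
odd j ∈ A: C_{i+2^h} ∩ C_j = C_j if i = 2^s·i₁ and j = i₁ + 2^{h−s} for some
s ∈ {2, …, h−2} and odd i₁ with 1 ≤ i₁ ≤ 2^{h−1−s} − 1; otherwise
C_{i+2^h} ∩ C_j = ∅ (cosets modulo 2^m − 1). -/
theorem stmt8 (m h : ℕ) (hmo : Odd m) (hm5 : 5 ≤ m) (hh : h = (m - 1) / 2)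
    (i j : ℕ) (hi1 : 1 ≤ i) (hi2 : i ≤ 2 ^ (h - 1) - 1)
    (hj1 : 1 ≤ j) (hj2 : j ≤ 2 ^ (h - 1) - 1) (hjodd : Odd j) :
    ((∃ s : ℕ, 2 ≤ s ∧ s ≤ h - 2 ∧ ∃ i₁ : ℕ, Odd i₁ ∧ 1 ≤ i₁ ∧
        i₁ ≤ 2 ^ (h - 1 - s) - 1 ∧ i = 2 ^ s * i₁ ∧ j = i₁ + 2 ^ (h - s)) →
      cosetC (2 ^ m - 1) (i + 2 ^ h) ∩ cosetC (2 ^ m - 1) j =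
        cosetC (2 ^ m - 1) j) ∧
    (¬ (∃ s : ℕ, 2 ≤ s ∧ s ≤ h - 2 ∧ ∃ i₁ : ℕ, Odd i₁ ∧ 1 ≤ i₁ ∧
        i₁ ≤ 2 ^ (h - 1 - s) - 1 ∧ i = 2 ^ s * i₁ ∧ j = i₁ + 2 ^ (h - s)) →
      cosetC (2 ^ m - 1) (i + 2 ^ h) ∩ cosetC (2 ^ m - 1) j = ∅) :=
  stmt8_general m h hmo hh i j hi1 hi2 hj2 hjodd
end

section
/- Let m = 2h + 1 ≥ 5 be odd and A = {1, 2, …, 2^{h−1} − 1}. Then, for 2-cyclotomic cosets modulo 2^m − 1: (i) for any i ∈ A and j ∈ Γ_(h), C_{i+2^h} ∩ C_{j+2^{h+1}} ≠ ∅ only if (i, j) = (1, 1); moreover C_j ∩ C_{j+2^{h+1}} = ∅ for every j ∈ Γ_(h); (ii) for any i ∈ A and any odd j ∈ A, C_{i+2^h} ∩ C_j = C_j if there exist s ∈ {1, 2, …, h−2} and i₁ ∈ Γ_(h−1−s) such that i = 2^s·i₁ and j = i₁ + 2^{h−s}, and otherwise C_{i+2^h} ∩ C_j = ∅. -/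
lemma rot_eq (m u a : ℕ) (hu : u ≤ m) (ha : a < 2 ^ m - 1) :
    a * 2 ^ u % (2 ^ m - 1) = a % 2 ^ (m - u) * 2 ^ u + a / 2 ^ (m - u) := by
  set k := m - u with hk
  set v := 2 ^ m - 1 with hv
  have h1 : 1 ≤ 2 ^ m := Nat.one_le_two_pow
  have hvm : v + 1 = 2 ^ m := by omega
  have hm' : 2 ^ k * 2 ^ u = v + 1 := by rw [← pow_add, hvm]; congr 1; omega
  have hq : a / 2 ^ k < 2 ^ u := Nat.div_lt_of_lt_mul (by rw [hm']; omega)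
  have hr : a % 2 ^ k < 2 ^ k := Nat.mod_lt _ (by positivity)
  have hdm : 2 ^ k * (a / 2 ^ k) + a % 2 ^ k = a := Nat.div_add_mod a (2 ^ k)
  have key : a * 2 ^ u = (a % 2 ^ k * 2 ^ u + a / 2 ^ k) + (a / 2 ^ k) * v := by
    calc a * 2 ^ u = (2 ^ k * (a / 2 ^ k) + a % 2 ^ k) * 2 ^ u := by rw [hdm]
      _ = (a / 2 ^ k) * (2 ^ k * 2 ^ u) + a % 2 ^ k * 2 ^ u := by ring
      _ = (a / 2 ^ k) * (v + 1) + a % 2 ^ k * 2 ^ u := by rw [hm']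
      _ = (a % 2 ^ k * 2 ^ u + a / 2 ^ k) + (a / 2 ^ k) * v := by ring
  have hlt : a % 2 ^ k * 2 ^ u + a / 2 ^ k < v := by
    set Q := 2 ^ u
    set K := 2 ^ k
    have hQ : 1 ≤ Q := Nat.one_le_two_pow
    rcases Nat.lt_or_ge (a % K + 1) K with hc | hc
    · nlinarith [hdm, hq, hr]
    · have hrK : a % K = K - 1 := by omega
      have : K * (a / K + 1) < K * Q := by nlinarith [hdm]
      have hq2 : a / K + 1 < Q := Nat.lt_of_mul_lt_mul_left this
      nlinarith [hdm]
  rw [key, Nat.add_mul_mod_self_right]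
  exact Nat.mod_eq_of_lt hlt

lemma coset_subset (v a b u : ℕ) (hb : b % v = a * 2 ^ u % v) :
    cosetC v b ⊆ cosetC v a := by
  rintro x ⟨t, rfl⟩
  exact ⟨u + t, by rw [Nat.mul_mod, hb, ← Nat.mul_mod, mul_assoc, ← pow_add]⟩

lemma coset_inter_iff (m a b : ℕ) (hm : 0 < m) (hb : b < 2 ^ m - 1) :
    (cosetC (2 ^ m - 1) a ∩ cosetC (2 ^ m - 1) b).Nonempty ↔
      ∃ u, u < m ∧ b = a * 2 ^ u % (2 ^ m - 1) := by
  set v := 2 ^ m - 1 with hv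
  have h1 : 1 ≤ 2 ^ m := Nat.one_le_two_pow
  have hvm : v + 1 = 2 ^ m := by omega
  have hpowm : (2 : ℕ) ^ m ≡ 1 [MOD v] := by
    show 2 ^ m % v = 1 % v
    rw [← hvm]; exact Nat.add_mod_left v 1
  have hpow : ∀ n, (2 : ℕ) ^ (m * n) ≡ 1 [MOD v] := by
    intro n
    rw [pow_mul]
    simpa using hpowm.pow n
  constructor
  · rintro ⟨x, ⟨s, hs⟩, ⟨t, ht⟩⟩
    have hst : a * 2 ^ s ≡ b * 2 ^ t [MOD v] := by
      show a * 2 ^ s % v = b * 2 ^ t % v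
      omega
    set e := s + (m * (t + 1) - t) with he
    have hme : b ≡ a * 2 ^ e [MOD v] := by
      calc b ≡ b * 2 ^ (m * (t + 1)) [MOD v] := by
              simpa using ((hpow (t + 1)).mul_left b).symm
        _ = (b * 2 ^ t) * 2 ^ (m * (t + 1) - t) := by
              have hte : t ≤ m * (t + 1) :=
                le_trans (by omega) (Nat.mul_le_mul_right (t + 1) hm)
              rw [mul_assoc, ← pow_add]; congr 2; omega
        _ ≡ (a * 2 ^ s) * 2 ^ (m * (t + 1) - t) [MOD v] :=
              (hst.symm).mul_right _
        _ = a * 2 ^ e := by rw [mul_assoc, ← pow_add]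
    obtain ⟨d, r, hr, hed⟩ : ∃ d r, r < m ∧ e = m * d + r :=
      ⟨e / m, e % m, Nat.mod_lt _ hm, (Nat.div_add_mod e m).symm⟩
    have he2 : a * 2 ^ e ≡ a * 2 ^ r [MOD v] := by
      have heq : a * 2 ^ e = 2 ^ (m * d) * (a * 2 ^ r) := by
        rw [hed, pow_add]; ring
      rw [heq]
      simpa using (hpow d).mul_right (a * 2 ^ r)
    refine ⟨r, hr, ?_⟩
    have hfin := hme.trans he2
    have hbb : b % v = b := Nat.mod_eq_of_lt hb
    calc b = b % v := hbb.symm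
      _ = a * 2 ^ r % v := hfin
  · rintro ⟨u, _, hu⟩
    exact ⟨b, ⟨u, hu⟩, ⟨0, by simp [Nat.mod_eq_of_lt hb]⟩⟩

lemma modcalc (i h k : ℕ) (hk : k ≤ h) :
    (i + 2 ^ h) % 2 ^ k = i % 2 ^ k ∧ (i + 2 ^ h) / 2 ^ k = i / 2 ^ k + 2 ^ (h - k) := by
  have hsplit : (2 : ℕ) ^ h = 2 ^ k * 2 ^ (h - k) := by rw [← pow_add]; congr 1; omega
  rw [hsplit]
  exact ⟨Nat.add_mul_mod_self_left i (2 ^ k) (2 ^ (h - k)),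
    Nat.add_mul_div_left i _ (by positivity)⟩

/-- Let m = 2h+1 ≥ 5 be odd and A = {1, …, 2^{h−1} − 1}. For cosets modulo
2^m − 1: (i) for i ∈ A and j ∈ Γ_(h), C_{i+2^h} ∩ C_{j+2^{h+1}} ≠ ∅ only if
(i,j) = (1,1); moreover C_j ∩ C_{j+2^{h+1}} = ∅ for every j ∈ Γ_(h);
(ii) for i ∈ A and odd j ∈ A, C_{i+2^h} ∩ C_j = C_j if i = 2^s·i₁ and
j = i₁ + 2^{h−s} for some s ∈ {1, …, h−2} and i₁ ∈ Γ_(h−1−s), and otherwise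
C_{i+2^h} ∩ C_j = ∅. -/
theorem stmt12 (m h : ℕ) (hm : m = 2 * h + 1) (hm5 : 5 ≤ m) :
    (∀ i : ℕ, 1 ≤ i → i ≤ 2 ^ (h - 1) - 1 →
      ∀ j : ℕ, Odd j → 1 ≤ j → j ≤ 2 ^ h - 1 →
        (cosetC (2 ^ m - 1) (i + 2 ^ h) ∩
            cosetC (2 ^ m - 1) (j + 2 ^ (h + 1))).Nonempty →
          i = 1 ∧ j = 1) ∧
    (∀ j : ℕ, Odd j → 1 ≤ j → j ≤ 2 ^ h - 1 →
      cosetC (2 ^ m - 1) j ∩ cosetC (2 ^ m - 1) (j + 2 ^ (h + 1)) = ∅) ∧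
    (∀ i : ℕ, 1 ≤ i → i ≤ 2 ^ (h - 1) - 1 →
      ∀ j : ℕ, Odd j → 1 ≤ j → j ≤ 2 ^ (h - 1) - 1 →
        ((∃ s : ℕ, 1 ≤ s ∧ s ≤ h - 2 ∧ ∃ i₁ : ℕ, Odd i₁ ∧ 1 ≤ i₁ ∧
            i₁ ≤ 2 ^ (h - 1 - s) - 1 ∧ i = 2 ^ s * i₁ ∧ j = i₁ + 2 ^ (h - s)) →
          cosetC (2 ^ m - 1) (i + 2 ^ h) ∩ cosetC (2 ^ m - 1) j =
            cosetC (2 ^ m - 1) j) ∧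
        (¬ (∃ s : ℕ, 1 ≤ s ∧ s ≤ h - 2 ∧ ∃ i₁ : ℕ, Odd i₁ ∧ 1 ≤ i₁ ∧
            i₁ ≤ 2 ^ (h - 1 - s) - 1 ∧ i = 2 ^ s * i₁ ∧ j = i₁ + 2 ^ (h - s)) →
          cosetC (2 ^ m - 1) (i + 2 ^ h) ∩ cosetC (2 ^ m - 1) j = ∅)) := by
  have h2 : 2 ≤ h := by omega
  have hm0 : 0 < m := by omega
  -- numeric pow facts, X := 2^(h-1)
  have hX2 : 2 ≤ 2 ^ (h - 1) := by
    calc 2 = 2 ^ 1 := rfl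
    _ ≤ 2 ^ (h - 1) := Nat.pow_le_pow_right (by norm_num) (by omega)
  have e1 : (2 : ℕ) ^ h = 2 * 2 ^ (h - 1) := by
    rw [← pow_succ']; congr 1; omega
  have e2 : (2 : ℕ) ^ (h + 1) = 4 * 2 ^ (h - 1) := by
    rw [show (4 : ℕ) = 2 ^ 2 by norm_num, ← pow_add]; congr 1; omega
  have e3 : (2 : ℕ) ^ (h + 2) = 8 * 2 ^ (h - 1) := by
    rw [show (8 : ℕ) = 2 ^ 3 by norm_num, ← pow_add]; congr 1; omega
  have e4 : 16 * 2 ^ (h - 1) ≤ 2 ^ m := by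
    calc 16 * 2 ^ (h - 1) = 2 ^ (h + 3) := by
          rw [show (16 : ℕ) = 2 ^ 4 by norm_num, ← pow_add]; congr 1; omega
      _ ≤ 2 ^ m := Nat.pow_le_pow_right (by norm_num) (by omega)
  have hv1 : (1 : ℕ) ≤ 2 ^ m := Nat.one_le_two_pow
  -- classification of rotations of a = i + 2^h for i < 2^h
  refine ⟨?_, ?_, ?_⟩
  · -- part (i)(a)
    intro i hi1 hi2 j hjodd hj1 hj2 hne
    have hb : j + 2 ^ (h + 1) < 2 ^ m - 1 := by omega
    obtain ⟨u, hum, hbu⟩ := (coset_inter_iff m (i + 2 ^ h) (j + 2 ^ (h + 1)) hm0 hb).mp hne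
    have ha : i + 2 ^ h < 2 ^ m - 1 := by omega
    rw [rot_eq m u (i + 2 ^ h) hum.le ha] at hbu
    rcases Nat.lt_or_ge u (h + 1) with hcase | hcase
    · -- u ≤ h : rot = a * 2^u
      have hlt : i + 2 ^ h < 2 ^ (m - u) := by
        have : (2 : ℕ) ^ (h + 1) ≤ 2 ^ (m - u) :=
          Nat.pow_le_pow_right (by norm_num) (by omega)
        omega
      rw [Nat.mod_eq_of_lt hlt, Nat.div_eq_of_lt hlt, Nat.add_zero] at hbu
      rcases Nat.eq_zero_or_pos u with hu0 | hu1
      · subst hu0; simp at hbu; omega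
      · exfalso
        obtain ⟨P, hP⟩ : ∃ P, (i + 2 ^ h) * 2 ^ u = 2 * P := by
          refine ⟨(i + 2 ^ h) * 2 ^ (u - 1), ?_⟩
          rw [show (2 : ℕ) ^ u = 2 * 2 ^ (u - 1) by rw [← pow_succ']; congr 1; omega]
          ring
        obtain ⟨c, hc⟩ := hjodd
        omega
    · -- u ≥ h + 1
      have hk1 : 1 ≤ m - u := by omega
      have hk2 : m - u ≤ h := by omega
      obtain ⟨hmod, hdiv⟩ := modcalc i h (m - u) hk2
      rcases Nat.eq_or_lt_of_le hcase with hu | hu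
      · -- u = h + 1, m - u = h
        have hku : m - u = h := by omega
        rw [hmod, hdiv, hku, Nat.mod_eq_of_lt (show i < 2 ^ h by omega),
          Nat.div_eq_of_lt (show i < 2 ^ h by omega)] at hbu
        simp only [Nat.sub_self, pow_zero] at hbu
        rw [← hu] at hbu
        -- hbu : j + 2^(h+1) = i * 2^(h+1) + (0 + 1)
        have hieq : i = 1 := by
          rcases Nat.lt_or_ge i 2 with h1 | h1
          · omega
          · exfalso
            have : 2 * 2 ^ (h + 1) ≤ i * 2 ^ (h + 1) :=
              Nat.mul_le_mul_right _ h1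
            omega
        rw [hieq, one_mul] at hbu
        exact ⟨hieq, by omega⟩
      · -- u ≥ h + 2
        exfalso
        rw [hmod, hdiv] at hbu
        clear hmod hdiv
        obtain ⟨R, hR⟩ : ∃ R, i % 2 ^ (m - u) = R := ⟨_, rfl⟩
        obtain ⟨Q, hQ⟩ : ∃ Q, i / 2 ^ (m - u) = Q := ⟨_, rfl⟩
        rw [hR, hQ] at hbu
        rcases Nat.eq_zero_or_pos R with h0 | h0
        · rw [h0, Nat.zero_mul, Nat.zero_add] at hbu
          have hd : Q ≤ i := hQ ▸ Nat.div_le_self _ _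
          have hp : (2 : ℕ) ^ (h - (m - u)) ≤ 2 ^ (h - 1) :=
            Nat.pow_le_pow_right (by norm_num) (by omega)
          omega
        · have hu2 : (2 : ℕ) ^ (h + 2) ≤ 2 ^ u :=
            Nat.pow_le_pow_right (by norm_num) (by omega)
          have hge : 2 ^ u ≤ R * 2 ^ u := Nat.le_mul_of_pos_left _ h0
          have hl : 0 < 2 ^ (h - (m - u)) := by positivity
          omega
  · -- part (i)(b)
    intro j hjodd hj1 hj2
    rw [← Set.not_nonempty_iff_eq_empty]
    intro hne
    have hb : j + 2 ^ (h + 1) < 2 ^ m - 1 := by omega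
    obtain ⟨u, hum, hbu⟩ := (coset_inter_iff m j (j + 2 ^ (h + 1)) hm0 hb).mp hne
    rw [rot_eq m u j hum.le (by omega)] at hbu
    rcases Nat.lt_or_ge u (h + 2) with hcase | hcase
    · have hlt : j < 2 ^ (m - u) := by
        have : (2 : ℕ) ^ h ≤ 2 ^ (m - u) :=
          Nat.pow_le_pow_right (by norm_num) (by omega)
        omega
      rw [Nat.mod_eq_of_lt hlt, Nat.div_eq_of_lt hlt, Nat.add_zero] at hbu
      rcases Nat.eq_zero_or_pos u with hu0 | hu1
      · subst hu0
        simp only [pow_zero, mul_one] at hbu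
        omega
      · obtain ⟨P, hP⟩ : ∃ P, j * 2 ^ u = 2 * P := by
          refine ⟨j * 2 ^ (u - 1), ?_⟩
          rw [show (2 : ℕ) ^ u = 2 * 2 ^ (u - 1) by rw [← pow_succ']; congr 1; omega]
          ring
        obtain ⟨c, hc⟩ := hjodd
        omega
    · have hk1 : 1 ≤ m - u := by omega
      obtain ⟨R, hR⟩ : ∃ R, j % 2 ^ (m - u) = R := ⟨_, rfl⟩
      obtain ⟨Q, hQ⟩ : ∃ Q, j / 2 ^ (m - u) = Q := ⟨_, rfl⟩
      rw [hR, hQ] at hbu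
      have h0 : 0 < R := by
        rcases Nat.eq_zero_or_pos R with h0 | h0
        · exfalso
          have hdvd : 2 ∣ j := by
            refine dvd_trans ?_ (Nat.dvd_of_mod_eq_zero (hR.trans h0))
            calc (2:ℕ) = 2 ^ 1 := rfl
              _ ∣ 2 ^ (m - u) := pow_dvd_pow 2 hk1
          obtain ⟨c, hc⟩ := hjodd
          omega
        · exact h0
      have hu2 : (2 : ℕ) ^ (h + 2) ≤ 2 ^ u :=
        Nat.pow_le_pow_right (by norm_num) (by omega)
      have hge : 2 ^ u ≤ R * 2 ^ u := Nat.le_mul_of_pos_left _ h0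
      omega
  · -- part (ii)
    intro i hi1 hi2 j hjodd hj1 hj2
    constructor
    · rintro ⟨s, hs1, hs2, i₁, hi1odd, hi11, hi12, hieq, hjeq⟩
      apply Set.inter_eq_right.mpr
      apply coset_subset _ _ _ (m - s)
      have key : i + 2 ^ h = 2 ^ s * j := by
        have hsplit : (2 : ℕ) ^ h = 2 ^ s * 2 ^ (h - s) := by
          rw [← pow_add]; congr 1; omega
        rw [hieq, hjeq, hsplit]; ring
      have key2 : (i + 2 ^ h) * 2 ^ (m - s) = j * 2 ^ m := by
        rw [key, mul_comm (2 ^ s) j, mul_assoc, ← pow_add]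
        congr 2; omega
      have key3 : j * 2 ^ m % (2 ^ m - 1) = j % (2 ^ m - 1) := by
        have hstep : j * 2 ^ m = (2 ^ m - 1) * j + j := by
          have h2m : 2 ^ m - 1 + 1 = 2 ^ m := by omega
          calc j * 2 ^ m = j * (2 ^ m - 1 + 1) := by rw [h2m]
            _ = (2 ^ m - 1) * j + j := by ring
        rw [hstep, Nat.mul_add_mod]
      rw [key2, key3]
    · intro hnex
      rw [← Set.not_nonempty_iff_eq_empty]
      intro hne
      have hb : j < 2 ^ m - 1 := by omega
      obtain ⟨u, hum, hbu⟩ := (coset_inter_iff m (i + 2 ^ h) j hm0 hb).mp hne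
      have ha : i + 2 ^ h < 2 ^ m - 1 := by omega
      rw [rot_eq m u (i + 2 ^ h) hum.le ha] at hbu
      rcases Nat.lt_or_ge u (h + 1) with hcase | hcase
      · have hlt : i + 2 ^ h < 2 ^ (m - u) := by
          have : (2 : ℕ) ^ (h + 1) ≤ 2 ^ (m - u) :=
            Nat.pow_le_pow_right (by norm_num) (by omega)
          omega
        rw [Nat.mod_eq_of_lt hlt, Nat.div_eq_of_lt hlt, Nat.add_zero] at hbu
        have : i + 2 ^ h ≤ (i + 2 ^ h) * 2 ^ u :=
          Nat.le_mul_of_pos_right _ (by positivity)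
        omega
      · have hk1 : 1 ≤ m - u := by omega
        have hk2 : m - u ≤ h := by omega
        obtain ⟨hmod, hdiv⟩ := modcalc i h (m - u) hk2
        rcases Nat.eq_or_lt_of_le hcase with hu | hu
        · -- u = h + 1
          have hku : m - u = h := by omega
          rw [hmod, hdiv, hku, Nat.mod_eq_of_lt (show i < 2 ^ h by omega),
            Nat.div_eq_of_lt (show i < 2 ^ h by omega)] at hbu
          simp only [Nat.sub_self, pow_zero] at hbu
          have : 2 ^ (h + 1) ≤ i * 2 ^ (h + 1) := Nat.le_mul_of_pos_left _ (by omega)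
          rw [← hu] at hbu
          omega
        · -- u ≥ h + 2
          have hk3 : m - u ≤ h - 1 := by omega
          rw [hmod, hdiv] at hbu
          clear hmod hdiv
          obtain ⟨Q, hQ⟩ : ∃ Q, i / 2 ^ (m - u) = Q := ⟨_, rfl⟩
          obtain ⟨R, hR⟩ : ∃ R, i % 2 ^ (m - u) = R := ⟨_, rfl⟩
          rw [hR, hQ] at hbu
          rcases Nat.eq_zero_or_pos R with h0 | h0
          · rw [h0, Nat.zero_mul, Nat.zero_add] at hbu
            apply hnex
            have hdvd : 2 ^ (m - u) ∣ i := Nat.dvd_of_mod_eq_zero (hR.trans h0)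
            have hieq : i = 2 ^ (m - u) * Q := by
              rw [← hQ, mul_comm]; exact (Nat.div_mul_cancel hdvd).symm
            have hi₁1 : 1 ≤ Q := by
              rcases Nat.eq_zero_or_pos Q with hz | hz
              · rw [hz, Nat.mul_zero] at hieq; omega
              · exact hz
            have hks : m - u ≤ h - 2 := by
              by_contra hcon
              have hkh : m - u = h - 1 := by omega
              have hQ2 : 2 ^ (h - 1) ≤ 2 ^ (h - 1) * Q :=
                Nat.le_mul_of_pos_right _ hi₁1
              rw [hkh] at hieq
              omega
            have hi₁2 : Q ≤ 2 ^ (h - 1 - (m - u)) - 1 := by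
              have hsplit : (2 : ℕ) ^ (h - 1) = 2 ^ (m - u) * 2 ^ (h - 1 - (m - u)) := by
                rw [← pow_add]; congr 1; omega
              have hlt2 : 2 ^ (m - u) * Q < 2 ^ (m - u) * 2 ^ (h - 1 - (m - u)) := by
                omega
              have := Nat.lt_of_mul_lt_mul_left hlt2
              omega
            have hodd : Odd Q := by
              rw [Nat.odd_iff]
              obtain ⟨Y, hY⟩ : ∃ Y, (2 : ℕ) ^ (h - (m - u)) = 2 * Y :=
                ⟨2 ^ (h - (m - u) - 1), by rw [← pow_succ']; congr 1; omega⟩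
              obtain ⟨c, hc⟩ := hjodd
              omega
            exact ⟨m - u, hk1, hks, Q, hodd, hi₁1, hi₁2, hieq, by omega⟩
          · have hu2 : (2 : ℕ) ^ (h + 2) ≤ 2 ^ u :=
              Nat.pow_le_pow_right (by norm_num) (by omega)
            have hge : 2 ^ u ≤ R * 2 ^ u := Nat.le_mul_of_pos_left _ h0
            have hl : 0 < 2 ^ (h - (m - u)) := by positivity
            omega
end

section
/- Let m ≥ 6 be even and h = m/2. For any i ∈ {1, 2, …, 2^{h−1} − 1} and any j ∈ Γ_(h), the 2-cyclotomic cosets modulo 2^m − 1 satisfy: if C_{i+2^h} ∩ C_{j+2^h} ≠ ∅ then i = j and j ∈ Γ_(h−1). -/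
private lemma modeq_eq_of_lt {n a b : ℕ} (h : a ≡ b [MOD n]) (ha : a < n) (hb : b < n) :
    a = b := by
  rwa [Nat.ModEq, Nat.mod_eq_of_lt ha, Nat.mod_eq_of_lt hb] at h

/-- Let m ≥ 6 be even and h = m/2. For any i with 1 ≤ i ≤ 2^{h−1} − 1 and any
odd j with 1 ≤ j ≤ 2^h − 1 (j ∈ Γ_(h)): if C_{i+2^h} ∩ C_{j+2^h} ≠ ∅
(cosets modulo 2^m − 1) then i = j and j ∈ Γ_(h−1). -/
theorem stmt16 (m h : ℕ) (hme : Even m) (hm6 : 6 ≤ m) (hh : h = m / 2)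
    (i : ℕ) (hi1 : 1 ≤ i) (hi2 : i ≤ 2 ^ (h - 1) - 1)
    (j : ℕ) (hjodd : Odd j) (hj1 : 1 ≤ j) (hj2 : j ≤ 2 ^ h - 1)
    (hne : (cosetC (2 ^ m - 1) (i + 2 ^ h) ∩
        cosetC (2 ^ m - 1) (j + 2 ^ h)).Nonempty) :
    i = j ∧ j ≤ 2 ^ (h - 1) - 1 := by
  obtain ⟨r, hr⟩ := hme
  have hm : m = 2 * h := by omega
  have hh3 : 3 ≤ h := by omega
  set A := 2 ^ (h - 1) with hA
  have hA4 : 4 ≤ A := by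
    rw [hA]
    calc (4 : ℕ) = 2 ^ 2 := by norm_num
    _ ≤ 2 ^ (h - 1) := Nat.pow_le_pow_right (by norm_num) (by omega)
  have h2h : 2 ^ h = 2 * A := by
    rw [hA, ← pow_succ', Nat.sub_add_cancel (by omega : 1 ≤ h)]
  have hm2 : 2 ^ m = 4 * (A * A) := by
    rw [hm, two_mul, pow_add, h2h]; ring
  set v := 2 ^ m - 1 with hv
  have hv1 : v + 1 = 4 * (A * A) := by
    have h1 : 1 ≤ 2 ^ m := Nat.one_le_two_pow
    omega
  have hYA : A * 4 ≤ A * A := Nat.mul_le_mul (le_refl A) hA4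
  have hvpos : 0 < v := by omega
  have ha_lt : i + 2 ^ h < v := by omega
  have hb_lt : j + 2 ^ h < v := by omega
  -- extract the intersection witness
  obtain ⟨x, hxa, hxb⟩ := hne
  simp only [cosetC, Set.mem_setOf_eq] at hxa hxb
  obtain ⟨s, hs⟩ := hxa
  obtain ⟨t, ht⟩ := hxb
  have step1 : (i + 2 ^ h) * 2 ^ s ≡ (j + 2 ^ h) * 2 ^ t [MOD v] := by
    show _ % v = _ % v
    omega
  have h2m1 : 2 ^ m ≡ 1 [MOD v] := by
    show 2 ^ m % v = 1 % v
    have h1 : 1 ≤ 2 ^ m := Nat.one_le_two_pow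
    rw [show 2 ^ m = v + 1 by omega, Nat.add_mod_left]
  have hms : m * s = s + s * (m - 1) := by
    have h1 : m - 1 + 1 = m := by omega
    calc m * s = ((m - 1) + 1) * s := by rw [h1]
    _ = s + s * (m - 1) := by ring
  have key : (i + 2 ^ h) ≡ (j + 2 ^ h) * 2 ^ ((t + s * (m - 1)) % m) [MOD v] := by
    calc (i + 2 ^ h) = (i + 2 ^ h) * 1 ^ s := by rw [one_pow, mul_one]
    _ ≡ (i + 2 ^ h) * (2 ^ m) ^ s [MOD v] := Nat.ModEq.mul_left _ ((h2m1.pow s).symm)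
    _ = (i + 2 ^ h) * 2 ^ s * 2 ^ (s * (m - 1)) := by
        rw [← pow_mul, hms, pow_add, mul_assoc]
    _ ≡ (j + 2 ^ h) * 2 ^ t * 2 ^ (s * (m - 1)) [MOD v] := step1.mul_right _
    _ = (j + 2 ^ h) * 2 ^ (t + s * (m - 1)) := by rw [mul_assoc, ← pow_add]
    _ = (j + 2 ^ h) * ((2 ^ m) ^ ((t + s * (m - 1)) / m) *
          2 ^ ((t + s * (m - 1)) % m)) := by
        rw [← pow_mul, ← pow_add, Nat.div_add_mod]
    _ ≡ (j + 2 ^ h) * (1 ^ ((t + s * (m - 1)) / m) *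
          2 ^ ((t + s * (m - 1)) % m)) [MOD v] :=
        Nat.ModEq.mul_left _ (Nat.ModEq.mul_right _ (h2m1.pow _))
    _ = (j + 2 ^ h) * 2 ^ ((t + s * (m - 1)) % m) := by rw [one_pow, one_mul]
  have hult : (t + s * (m - 1)) % m < m := Nat.mod_lt _ (by omega)
  set u := (t + s * (m - 1)) % m with huDef
  clear_value u
  by_cases hu0 : u = 0
  · -- u = 0 : a = b
    rw [hu0, pow_zero, mul_one] at key
    have hab := modeq_eq_of_lt key ha_lt hb_lt
    constructor <;> omega
  by_cases huh : u < h
  · -- 1 ≤ u ≤ h-1 : contradiction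
    exfalso
    have hB2 : (2 : ℕ) ≤ 2 ^ u := by
      simpa using Nat.pow_le_pow_right (show 1 ≤ 2 by norm_num) (show 1 ≤ u by omega)
    have hBA : 2 ^ u ≤ A := by
      rw [hA]; exact Nat.pow_le_pow_right (by norm_num) (by omega)
    have h1 : (j + 2 ^ h + 1) * 2 ^ u ≤ (4 * A) * A :=
      Nat.mul_le_mul (by omega) hBA
    have h2 : (j + 2 ^ h + 1) * 2 ^ u = (j + 2 ^ h) * 2 ^ u + 2 ^ u := by ring
    have h3 : (4 * A) * A = 4 * (A * A) := by ring
    have h2b : (j + 2 ^ h) * 2 ≤ (j + 2 ^ h) * 2 ^ u :=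
      Nat.mul_le_mul (le_refl _) hB2
    have hblt : (j + 2 ^ h) * 2 ^ u < v := by omega
    have heq := modeq_eq_of_lt key ha_lt hblt
    omega
  by_cases huh2 : u = h
  · -- u = h : forces i = j = 1
    rw [huh2] at key
    have hsp : (j + 2 ^ h) * 2 ^ h = j * 2 ^ h + 2 ^ m := by
      rw [hm, two_mul, pow_add]; ring
    have key2 : (i + 2 ^ h) ≡ j * 2 ^ h + 1 [MOD v] := by
      refine key.trans ?_
      rw [hsp]
      exact Nat.ModEq.add_left _ h2m1
    rw [h2h] at key2
    have h1 : (j + 1) * (2 * A) ≤ (2 * A) * (2 * A) :=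
      Nat.mul_le_mul (by omega) (le_refl _)
    have h2 : (j + 1) * (2 * A) = j * (2 * A) + 2 * A := by ring
    have h3 : (2 * A) * (2 * A) = 4 * (A * A) := by ring
    have hlt : j * (2 * A) + 1 < v := by omega
    have ha_lt2 : i + 2 * A < v := by omega
    have heq := modeq_eq_of_lt key2 ha_lt2 hlt
    rcases Nat.lt_or_ge j 2 with hj | hj
    · obtain rfl : j = 1 := by omega
      constructor <;> omega
    · exfalso
      have h5 : 2 * (2 * A) ≤ j * (2 * A) := Nat.mul_le_mul hj (le_refl _)
      omega
  · -- h+1 ≤ u ≤ m-1 : contradiction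
    exfalso
    have hk1 : 1 ≤ m - u := by omega
    have hCB : 2 ^ (m - u) * 2 ^ u = 4 * (A * A) := by
      rw [← pow_add, show (m - u) + u = m by omega, hm2]
    have hC2 : (2 : ℕ) ≤ 2 ^ (m - u) := by
      simpa using Nat.pow_le_pow_right (show 1 ≤ 2 by norm_num) hk1
    have hCpos : 0 < 2 ^ (m - u) := by omega
    have hdm := Nat.div_add_mod (j + 2 ^ h) (2 ^ (m - u))
    have hmod_lt : (j + 2 ^ h) % 2 ^ (m - u) < 2 ^ (m - u) :=
      Nat.mod_lt _ hCpos
    have hbodd : (j + 2 ^ h) % 2 = 1 := by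
      obtain ⟨c, hc⟩ := hjodd
      have h2d : (2 : ℕ) ∣ 2 ^ h := dvd_pow_self 2 (by omega)
      omega
    have hrodd : (j + 2 ^ h) % 2 ^ (m - u) % 2 = 1 := by
      rw [Nat.mod_mod_of_dvd _ (dvd_pow_self 2 (by omega) : (2 : ℕ) ∣ 2 ^ (m - u))]
      exact hbodd
    have hr1 : 1 ≤ (j + 2 ^ h) % 2 ^ (m - u) := by omega
    have hsplit : (j + 2 ^ h) * 2 ^ u =
        (j + 2 ^ h) / 2 ^ (m - u) * (4 * (A * A)) +
          ((j + 2 ^ h) % 2 ^ (m - u)) * 2 ^ u := by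
      calc (j + 2 ^ h) * 2 ^ u
          = (2 ^ (m - u) * ((j + 2 ^ h) / 2 ^ (m - u)) +
              (j + 2 ^ h) % 2 ^ (m - u)) * 2 ^ u := by rw [hdm]
      _ = (j + 2 ^ h) / 2 ^ (m - u) * (2 ^ (m - u) * 2 ^ u) +
            ((j + 2 ^ h) % 2 ^ (m - u)) * 2 ^ u := by ring
      _ = _ := by rw [hCB]
    have h4A1 : 4 * (A * A) ≡ 1 [MOD v] := hm2 ▸ h2m1
    have key2 : (i + 2 ^ h) ≡
        (j + 2 ^ h) / 2 ^ (m - u) * 1 +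
          ((j + 2 ^ h) % 2 ^ (m - u)) * 2 ^ u [MOD v] := by
      refine key.trans ?_
      rw [hsplit]
      exact Nat.ModEq.add_right _ (Nat.ModEq.mul_left _ h4A1)
    -- bounds
    have hq2 : 2 * ((j + 2 ^ h) / 2 ^ (m - u)) ≤
        2 ^ (m - u) * ((j + 2 ^ h) / 2 ^ (m - u)) :=
      Nat.mul_le_mul hC2 (le_refl _)
    have hrB : ((j + 2 ^ h) % 2 ^ (m - u) + 1) * 2 ^ u ≤ 2 ^ (m - u) * 2 ^ u :=
      Nat.mul_le_mul (by omega) (le_refl _)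
    have hrB2 : ((j + 2 ^ h) % 2 ^ (m - u) + 1) * 2 ^ u =
        ((j + 2 ^ h) % 2 ^ (m - u)) * 2 ^ u + 2 ^ u := by ring
    have hB4A : 4 * A ≤ 2 ^ u := by
      have h1 : 2 ^ (h + 1) ≤ 2 ^ u := Nat.pow_le_pow_right (by norm_num) (by omega)
      have h2 : 2 ^ (h + 1) = 4 * A := by rw [pow_succ, h2h]; ring
      omega
    have hBrB : 2 ^ u ≤ ((j + 2 ^ h) % 2 ^ (m - u)) * 2 ^ u :=
      Nat.le_mul_of_pos_left _ (by omega)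
    have hrhs_lt : (j + 2 ^ h) / 2 ^ (m - u) * 1 +
        ((j + 2 ^ h) % 2 ^ (m - u)) * 2 ^ u < v := by omega
    have heq := modeq_eq_of_lt key2 ha_lt hrhs_lt
    omega
end
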